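/- arXiv:1508.00467 — 9 statements merged into one kernel-verified Lean document; each statement's English description precedes it below -/
import Mathlib

section
/- If a topological space X has a full r-skeleton, then X has a full r-skeleton {r_A : A ∈ [X]^{≤ω}} indexed by the countable subsets of X (ordered by inclusion) such that for each countable A ⊆ X and each x ∈ A one has r_A(x) = x. -/
open Filter Topology Set

universe u v

/-- `[X]^{≤ω}`: the countable subsets of `X`, ordered by inclusion. -/
abbrev CtbSet (X : Type*) := {A : Set X // A.Countable}

/-- A map between families of countable sets is `ω`-monotone if it is monotone with respect to
inclusion and preserves unions of increasing `ω`-chains. -/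
def OmegaMonotone {X Y : Type*} (φ : CtbSet X → CtbSet Y) : Prop :=
  (∀ A B : CtbSet X, A.1 ⊆ B.1 → (φ A).1 ⊆ (φ B).1) ∧
  ∀ (A : ℕ → CtbSet X) (B : CtbSet X), (∀ n, (A n).1 ⊆ (A (n + 1)).1) →
    B.1 = ⋃ n, (A n).1 → (φ B).1 = ⋃ n, (φ (A n)).1

/-- An assignment of sets indexed by a poset `Γ` is `ω`-monotone if it is order preserving and
sends suprema of increasing `ω`-chains to the union of the images. -/
def OmegaMonotoneIdx {Γ Y : Type*} [Preorder Γ] (D : Γ → Set Y) : Prop :=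
  (∀ s t : Γ, s ≤ t → D s ⊆ D t) ∧
  ∀ (s : ℕ → Γ) (t : Γ), Monotone s → IsLUB (Set.range s) t → D t = ⋃ n, D (s n)

/-- `N` is a network of the map `f`. -/
def IsNetworkOfMap {X Y : Type*} [TopologicalSpace Y] (N : Set (Set X)) (f : X → Y) : Prop :=
  ∀ x : X, ∀ U : Set Y, IsOpen U → f x ∈ U → ∃ M ∈ N, x ∈ M ∧ f '' M ⊆ U

/-- `q : X → Y` is an `ℝ`-quotient map. -/
def RQuotient {X Y : Type*} [TopologicalSpace X] [TopologicalSpace Y] (q : X → Y) : Prop :=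
  Continuous q ∧ Function.Surjective q ∧ ∀ g : Y → ℝ, Continuous (g ∘ q) → Continuous g

/-- The family `r` of retractions indexed by `Γ` is an `r`-skeleton on `X`. -/
structure IsRSkeleton {X : Type*} [TopologicalSpace X] {Γ : Type*} [PartialOrder Γ]
    (r : Γ → X → X) : Prop where
  directed : ∀ s t : Γ, ∃ u, s ≤ u ∧ t ≤ u
  sigma : ∀ s : ℕ → Γ, Monotone s → ∃ t, IsLUB (Set.range s) t
  cont : ∀ s, Continuous (r s)
  retract : ∀ s x, r s (r s x) = r s x
  cosmic : ∀ s, ∃ N : Set (Set X), N.Countable ∧ (∀ M ∈ N, M ⊆ Set.range (r s)) ∧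
    ∀ x ∈ Set.range (r s), ∀ U : Set X, IsOpen U → x ∈ U → ∃ M ∈ N, x ∈ M ∧ M ⊆ U
  comm₁ : ∀ s t : Γ, s ≤ t → ∀ x, r s (r t x) = r s x
  comm₂ : ∀ s t : Γ, s ≤ t → ∀ x, r t (r s x) = r s x
  chain : ∀ (s : ℕ → Γ) (t : Γ), Monotone s → IsLUB (Set.range s) t →
    ∀ x, Tendsto (fun n => r (s n) x) atTop (𝓝 (r t x))
  toId : ∀ x : X, Tendsto (fun s : Γ => r s x) atTop (𝓝 x)

def IsFullRSkeleton {X : Type*} [TopologicalSpace X] {Γ : Type*} [PartialOrder Γ]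
    (r : Γ → X → X) : Prop :=
  IsRSkeleton r ∧ ∀ x : X, ∃ s : Γ, x ∈ Set.range (r s)

def HasFullRSkeleton (X : Type u) [TopologicalSpace X] : Prop :=
  ∃ (Γ : Type u) (inst : PartialOrder Γ) (r : Γ → X → X), @IsFullRSkeleton X _ Γ inst r

/-- A strong `r`-skeleton: an `r`-skeleton such that for every index `s`, every `n` and every
closed subset `F` of `X^n` there is `t ≥ s` whose `n`-th power maps `F` into itself. -/
def IsStrongRSkeleton {X : Type*} [TopologicalSpace X] {Γ : Type*} [PartialOrder Γ]
    (r : Γ → X → X) : Prop :=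
  IsRSkeleton r ∧ ∀ (s : Γ) (n : ℕ) (F : Set (Fin n → X)), IsClosed F →
    ∃ t : Γ, s ≤ t ∧ (fun (v : Fin n → X) (i : Fin n) => r t (v i)) '' F ⊆ F

def HasStrongRSkeleton (X : Type u) [TopologicalSpace X] : Prop :=
  ∃ (Γ : Type u) (inst : PartialOrder Γ) (r : Γ → X → X), @IsStrongRSkeleton X _ Γ inst r

/-- A `q`-skeleton on `X` indexed by the up-directed σ-complete poset `Γ`. -/
structure QSkeleton (X : Type u) [TopologicalSpace X] (Γ : Type v) [PartialOrder Γ] where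
  Xs : Γ → Type u
  top : ∀ s, TopologicalSpace (Xs s)
  q : ∀ s, X → Xs s
  D : Γ → Set X
  directed : ∀ s t : Γ, ∃ u, s ≤ u ∧ t ≤ u
  sigma : ∀ s : ℕ → Γ, Monotone s → ∃ t, IsLUB (Set.range s) t
  rquot : ∀ s, @RQuotient X (Xs s) _ (top s) (q s)
  D_ctble : ∀ s, (D s).Countable
  dense : ∀ s, @Dense (Xs s) (top s) (q s '' D s)
  proj : ∀ s t : Γ, s ≤ t → ∃ p : Xs t → Xs s, @Continuous _ _ (top t) (top s) p ∧
    Function.Surjective p ∧ ∀ x, q s x = p (q t x)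
  Dmono : OmegaMonotoneIdx D

/-- The `q`-skeleton is full: `C_p(X) = ⋃_s q_s^*(C_p(X_s))`. -/
def QSkeleton.Full {X : Type u} [TopologicalSpace X] {Γ : Type v} [PartialOrder Γ]
    (S : QSkeleton X Γ) : Prop :=
  ∀ f : X → ℝ, Continuous f →
    ∃ (s : Γ) (g : S.Xs s → ℝ), @Continuous _ _ (S.top s) _ g ∧ f = g ∘ S.q s

def HasFullQSkeleton (X : Type u) [TopologicalSpace X] : Prop :=
  ∃ (Γ : Type u) (inst : PartialOrder Γ) (S : @QSkeleton X _ Γ inst), S.Full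

/-- `C_p(X)`: continuous real-valued functions with the topology of pointwise convergence. -/
abbrev Cp (X : Type u) [TopologicalSpace X] : Type u := {f : X → ℝ // Continuous f}

/-- The diagonal map `Δ_A : X → ℝ^A` of a set `A ⊆ C_p(X)`. -/
def cpDiag {X : Type u} [TopologicalSpace X] (A : Set (Cp X)) (x : X) : ↥A → ℝ :=
  fun f => f.1.1 x

/-- The topology of the Alexandroff duplicate on `X × Bool`. -/
def ADTopology (X : Type*) [TopologicalSpace X] : TopologicalSpace (X × Bool) where
  IsOpen V := ∀ p ∈ V, p.2 = false →
    ∃ U : Set X, IsOpen U ∧ p.1 ∈ U ∧ {q : X × Bool | q.1 ∈ U ∧ q ≠ (p.1, true)} ⊆ V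
  isOpen_univ := fun p _ _ => ⟨Set.univ, isOpen_univ, trivial, fun _ _ => trivial⟩
  isOpen_inter := fun A B hA hB p hp hb => by
    obtain ⟨U, hU, hxU, hUA⟩ := hA p hp.1 hb
    obtain ⟨W, hW, hxW, hWB⟩ := hB p hp.2 hb
    exact ⟨U ∩ W, hU.inter hW, ⟨hxU, hxW⟩,
      fun q hq => ⟨hUA ⟨hq.1.1, hq.2⟩, hWB ⟨hq.1.2, hq.2⟩⟩⟩
  isOpen_sUnion := fun S hS p hp hb => by
    obtain ⟨V, hV, hpV⟩ := hp
    obtain ⟨U, hU, hxU, hUV⟩ := hS V hV p hpV hb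
    exact ⟨U, hU, hxU, fun q hq => ⟨V, hV, hUV hq⟩⟩

/-- The Alexandroff duplicate of `X`. -/
def AD (X : Type u) [TopologicalSpace X] : Type u := X × Bool

instance (X : Type u) [TopologicalSpace X] : TopologicalSpace (AD X) := ADTopology X

/-- A compact Hausdorff space is Corson compact if it embeds into a Σ-product of real lines. -/
def IsCorsonCompact (X : Type u) [TopologicalSpace X] : Prop :=
  CompactSpace X ∧ T2Space X ∧ ∃ (κ : Type u) (e : X → κ → ℝ),
    IsEmbedding e ∧ ∀ x, {i | e x i ≠ 0}.Countable

/-- The assignments `r`, `N` witness that `X` is monotonically retractable. -/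
structure MonRetractableWitness (X : Type u) [TopologicalSpace X]
    (r : CtbSet X → X → X) (N : CtbSet X → CtbSet (Set X)) : Prop where
  cont : ∀ A, Continuous (r A)
  retract : ∀ A x, r A (r A x) = r A x
  sub : ∀ A : CtbSet X, A.1 ⊆ Set.range (r A)
  network : ∀ A, IsNetworkOfMap (N A).1 (r A)
  mono : OmegaMonotone N

def MonotonicallyRetractable (X : Type u) [TopologicalSpace X] : Prop :=
  ∃ (r : CtbSet X → X → X) (N : CtbSet X → CtbSet (Set X)), MonRetractableWitness X r N

/-- `X` is monotonically `ω`-stable. -/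
def MonotonicallyOmegaStable (X : Type u) [TopologicalSpace X] : Prop :=
  ∃ N : CtbSet (Cp X) → CtbSet (Set X), OmegaMonotone N ∧
    ∀ A : CtbSet (Cp X), IsNetworkOfMap (N A).1 (cpDiag (closure A.1))

/-- A subset `K` is countably compact: every countable open cover of `K` has a finite subcover. -/
def IsCountablyCompactSet {X : Type*} [TopologicalSpace X] (K : Set X) : Prop :=
  ∀ U : ℕ → Set X, (∀ n, IsOpen (U n)) → K ⊆ ⋃ n, U n → ∃ t : Finset ℕ, K ⊆ ⋃ n ∈ t, U n

/-- The closure of `A` under `φ`. -/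
def phiBar {X : Type*} (φ : CtbSet X → CtbSet X) (A : CtbSet X) : Set X :=
  ⋂₀ {B : Set X | ∃ hB : B.Countable, A.1 ⊆ B ∧ (φ ⟨B, hB⟩).1 ⊆ B}

/-- The iterates `φ_n` of `φ`: `φ_0(A) = A`, `φ_{n+1}(A) = φ_n(A) ∪ φ(φ_n(A))`. -/
def phiIter {X : Type*} (φ : CtbSet X → CtbSet X) : ℕ → CtbSet X → CtbSet X
  | 0, A => A
  | n + 1, A => ⟨(phiIter φ n A).1 ∪ (φ (phiIter φ n A)).1,
      (phiIter φ n A).2.union (φ (phiIter φ n A)).2⟩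

theorem hasFullRSkeleton_indexed_by_ctbSet (X : Type u) [TopologicalSpace X] [T35Space X]
    (h : HasFullRSkeleton X) :
    ∃ r : CtbSet X → X → X, IsFullRSkeleton r ∧ ∀ A : CtbSet X, ∀ x ∈ A.1, r A x = x := by
  classical
  -- the union of an ω-chain in `CtbSet X` is its LUB (in fact of any sequence)
  have hTlub : ∀ s : ℕ → CtbSet X,
      IsLUB (Set.range s) ⟨⋃ n, (s n).1, Set.countable_iUnion fun n => (s n).2⟩ := by
    intro s
    constructor
    · rintro _ ⟨n, rfl⟩
      exact (Set.subset_iUnion (fun n => (s n).1) n : (s n).1 ⊆ _)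
    · intro b hb
      exact (Set.iUnion_subset fun n => hb (Set.mem_range_self n) : (⋃ n, (s n).1) ⊆ b.1)
  have hdir : ∀ A B : CtbSet X, ∃ C : CtbSet X, A ≤ C ∧ B ≤ C := by
    intro A B
    exact ⟨⟨A.1 ∪ B.1, A.2.union B.2⟩,
      (Set.subset_union_left : A.1 ⊆ _), (Set.subset_union_right : B.1 ⊆ _)⟩
  rcases isEmpty_or_nonempty X with hX | hX
  · -- degenerate case: `X` is empty
    refine ⟨fun _ => id, ⟨⟨hdir, fun s _ => ⟨_, hTlub s⟩, fun _ => continuous_id,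
      fun _ _ => rfl, ?_, fun _ _ _ _ => rfl, fun _ _ _ _ => rfl, ?_, fun x => isEmptyElim x⟩,
      fun x => isEmptyElim x⟩, fun _ _ _ => rfl⟩
    · intro s
      exact ⟨∅, Set.countable_empty, fun M hM => absurd hM (Set.notMem_empty M),
        fun x _ => isEmptyElim x⟩
    · intro s t _ _ x
      exact isEmptyElim x
  · -- main case
    obtain ⟨Γ, instΓ, r, hsk, hfull⟩ := h
    choose ex hex using hfull
    have hex' : ∀ x, r (ex x) x = x := by
      intro x
      obtain ⟨y, hy⟩ := hex x
      have h2 := hsk.retract (ex x) y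
      rwa [hy] at h2
    have γ0 : Γ := ex (Classical.arbitrary X)
    have hub' : ∀ s : Finset Γ, ∃ b, ∀ a ∈ s, a ≤ b := by
      intro s
      induction s using Finset.induction_on with
      | empty => exact ⟨γ0, by simp⟩
      | @insert a s _ ih =>
        obtain ⟨b, hb⟩ := ih
        obtain ⟨c, hac, hbc⟩ := hsk.directed a b
        refine ⟨c, fun d hd => ?_⟩
        rcases Finset.mem_insert.mp hd with rfl | hd
        · exact hac
        · exact (hb d hd).trans hbc
    choose ub hub using hub'
    -- a monotone assignment of indices to finite sets
    obtain ⟨v, hv0, hv1⟩ : ∃ v : ℕ → Finset X → Γ, (∀ F, v 0 F = γ0) ∧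
        ∀ n F, v (n+1) F = ub (F.powerset.image (v n) ∪ F.image ex) :=
      ⟨Nat.rec (fun _ => γ0) (fun n vn F => ub (F.powerset.image vn ∪ F.image ex)),
        fun _ => rfl, fun _ _ => rfl⟩
    obtain ⟨u, hu⟩ : ∃ u : Finset X → Γ, ∀ F, u F = v F.card F := ⟨_, fun _ => rfl⟩
    have hv_le_succ : ∀ (n : ℕ) (F G : Finset X), F ⊆ G → v n F ≤ v (n+1) G := by
      intro n F G hFG
      rw [hv1]
      exact hub _ _ (Finset.mem_union_left _
        (Finset.mem_image_of_mem _ (Finset.mem_powerset.mpr hFG)))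
    have hv_mono : ∀ (n m : ℕ) (F : Finset X), n ≤ m → v n F ≤ v m F := by
      intro n m F hnm
      induction hnm with
      | refl => exact le_rfl
      | step _ ih => exact ih.trans (hv_le_succ _ F F Finset.Subset.rfl)
    have hu_mono : ∀ {F G : Finset X}, F ⊆ G → u F ≤ u G := by
      intro F G hFG
      rw [hu F, hu G]
      rcases lt_or_eq_of_le (Finset.card_le_card hFG) with hc | hc
      · exact (hv_le_succ _ F G hFG).trans (hv_mono _ _ G (Nat.succ_le_of_lt hc))
      · rw [Finset.eq_of_subset_of_card_le hFG (le_of_eq hc.symm)]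
    have hu_ex : ∀ (F : Finset X) (x : X), x ∈ F → ex x ≤ u F := by
      intro F x hx
      rw [hu F]
      obtain ⟨n, hn⟩ := Nat.exists_eq_succ_of_ne_zero (Finset.card_ne_zero_of_mem hx)
      rw [hn, hv1]
      exact hub _ _ (Finset.mem_union_right _ (Finset.mem_image_of_mem ex hx))
    -- the canonical index of a countable set: the LUB of the images of its finite subsets
    have hσ' : ∀ A : CtbSet X, ∃ t : Γ, IsLUB (u '' {F : Finset X | ↑F ⊆ A.1}) t := by
      intro A
      have hctb : {F : Finset X | ↑F ⊆ A.1}.Countable := by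
        have h1 : ((fun F : Finset X => (↑F : Set X)) ⁻¹'
            {t | Set.Finite t ∧ t ⊆ A.1}).Countable :=
          (Set.countable_setOf_finite_subset A.2).preimage Finset.coe_injective
        refine h1.mono fun F hF => ?_
        exact ⟨F.finite_toSet, hF⟩
      obtain ⟨e, he⟩ := hctb.exists_eq_range ⟨∅, by simp⟩
      obtain ⟨G, hG0, hGs⟩ : ∃ G : ℕ → Finset X, G 0 = e 0 ∧ ∀ n, G (n+1) = G n ∪ e (n+1) :=
        ⟨Nat.rec (e 0) (fun n Gn => Gn ∪ e (n+1)), rfl, fun _ => rfl⟩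
      have heA : ∀ n, ↑(e n) ⊆ A.1 := by
        intro n
        have : e n ∈ {F : Finset X | ↑F ⊆ A.1} := he ▸ Set.mem_range_self n
        exact this
      have hGA : ∀ n, ↑(G n) ⊆ A.1 := by
        intro n
        induction n with
        | zero => rw [hG0]; exact heA 0
        | succ n ih =>
          rw [hGs, Finset.coe_union]
          exact Set.union_subset ih (heA (n+1))
      have heG : ∀ n, e n ⊆ G n := by
        intro n
        cases n with
        | zero => rw [hG0]
        | succ n => rw [hGs]; exact Finset.subset_union_right
      have hGm : Monotone fun n => u (G n) := by
        refine monotone_nat_of_le_succ fun n => hu_mono ?_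
        rw [hGs]
        exact Finset.subset_union_left
      obtain ⟨t, ht⟩ := hsk.sigma (fun n => u (G n)) hGm
      refine ⟨t, ?_, ?_⟩
      · rintro _ ⟨F, hF, rfl⟩
        have : F ∈ Set.range e := he ▸ hF
        obtain ⟨n, rfl⟩ := this
        exact (hu_mono (heG n)).trans (ht.1 (Set.mem_range_self n))
      · intro b hb
        refine ht.2 ?_
        rintro _ ⟨n, rfl⟩
        exact hb ⟨G n, hGA n, rfl⟩
    choose σ hσ using hσ'
    have hσmono : ∀ A B : CtbSet X, A.1 ⊆ B.1 → σ A ≤ σ B := by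
      intro A B hAB
      refine (hσ A).2 ?_
      rintro _ ⟨F, hF, rfl⟩
      exact (hσ B).1 ⟨F, hF.trans hAB, rfl⟩
    have hfix : ∀ A : CtbSet X, ∀ x ∈ A.1, r (σ A) x = x := by
      intro A x hx
      have hle : ex x ≤ σ A := by
        refine (hu_ex {x} x (Finset.mem_singleton_self x)).trans ((hσ A).1 ⟨{x}, ?_, rfl⟩)
        simpa using hx
      calc r (σ A) x = r (σ A) (r (ex x) x) := by rw [hex' x]
        _ = r (ex x) x := hsk.comm₂ _ _ hle x
        _ = x := hex' x
    -- finite subsets of increasing unions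
    have hfin : ∀ (s : ℕ → CtbSet X), Monotone s → ∀ F : Finset X,
        ↑F ⊆ (⋃ n, (s n).1) → ∃ n, ↑F ⊆ (s n).1 := by
      intro s hs F
      induction F using Finset.induction_on with
      | empty => intro _; exact ⟨0, by simp⟩
      | @insert a F _ ih =>
        intro hsub
        rw [Finset.coe_insert] at hsub
        obtain ⟨n, hn⟩ := ih ((Set.subset_insert a ↑F).trans hsub)
        obtain ⟨m, hm⟩ := Set.mem_iUnion.mp (hsub (Set.mem_insert a ↑F))
        refine ⟨max n m, ?_⟩
        rw [Finset.coe_insert]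
        exact Set.insert_subset ((hs (le_max_right n m) : (s m).1 ⊆ _) hm)
          (hn.trans (hs (le_max_left n m) : (s n).1 ⊆ _))
    have hσchain : ∀ (s : ℕ → CtbSet X) (t : CtbSet X), Monotone s →
        IsLUB (Set.range s) t → IsLUB (Set.range fun n => σ (s n)) (σ t) := by
      intro s t hs ht
      have htu : t.1 = ⋃ n, (s n).1 :=
        congrArg Subtype.val (ht.unique (hTlub s))
      constructor
      · rintro _ ⟨n, rfl⟩
        exact hσmono _ _ (ht.1 (Set.mem_range_self n) : (s n).1 ⊆ t.1)
      · intro b hb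
        refine (hσ t).2 ?_
        rintro _ ⟨F, hF, rfl⟩
        have hF' : ↑F ⊆ ⋃ n, (s n).1 := htu ▸ hF
        obtain ⟨n, hn⟩ := hfin s hs F hF'
        exact ((hσ (s n)).1 ⟨F, hn, rfl⟩).trans (hb (Set.mem_range_self n))
    refine ⟨fun A => r (σ A),
      ⟨⟨hdir, fun s _ => ⟨_, hTlub s⟩, fun A => hsk.cont _, fun A x => hsk.retract _ x,
        fun A => hsk.cosmic (σ A),
        fun A B hAB x => hsk.comm₁ _ _ (hσmono A B hAB) x,
        fun A B hAB x => hsk.comm₂ _ _ (hσmono A B hAB) x,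
        fun s t hs ht x => hsk.chain _ _ (fun m n hmn => hσmono _ _ (hs hmn)) (hσchain s t hs ht) x,
        ?_⟩,
        fun x => ⟨⟨{x}, Set.countable_singleton x⟩, x, hfix _ x rfl⟩⟩,
      fun A x hx => hfix A x hx⟩
    intro x
    have hmem : {B : CtbSet X | (⟨{x}, Set.countable_singleton x⟩ : CtbSet X) ≤ B}
        ∈ (atTop : Filter (CtbSet X)) := Filter.mem_atTop _
    refine Tendsto.congr' ?_ tendsto_const_nhds
    filter_upwards [hmem] with B hB
    exact (hfix B x (hB rfl)).symm
end

section
/- If a topological space X has a full r-skeleton, then its Alexandroff duplicate AD(X) also has a full r-skeleton. -/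
open Filter Topology Set

universe u v

/-!
Let `{r_s : s ∈ Γ}` be a full `r`-skeleton on `X`. Index the new skeleton by the pairs `(s, A)`
with `A ⊆ X` countable and fixed pointwise by `r_s`, ordered coordinatewise, and let `R_{(s,A)}`
fix the isolated points `(a, 1)`, `a ∈ A`, and send every other point `(x, i)` to `(r_s x, 0)`.
Its range `r_s(X) × {0} ∪ A × {1}` is cosmic, suprema of `ω`-chains are computed coordinatewise
(with unions in the second coordinate), the compatibility identities are inherited from those of
the `r_s`, and a point `(x, i)` is eventually fixed once `x ∈ A`, which fullness makes possible.
-/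

theorem Prod.mk_false_ne_mk_true {X : Type*} (x y : X) : (x, false) ≠ (y, true) := by simp

namespace AD

variable {X : Type*} [TopologicalSpace X]

theorem isOpen_iff {V : Set (AD X)} : IsOpen V ↔ ∀ p ∈ V, p.2 = false →
    ∃ U : Set X, IsOpen U ∧ p.1 ∈ U ∧ {q : X × Bool | q.1 ∈ U ∧ q ≠ (p.1, true)} ⊆ V :=
  Iff.rfl

theorem isOpen_singleton_true (x : X) : IsOpen ({(x, true)} : Set (AD X)) :=
  isOpen_iff.2 fun p hp hb => by
    obtain rfl : p = (x, true) := hp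
    cases hb

theorem isOpen_punctured [T1Space X] {U : Set X} (hU : IsOpen U) (x : X) :
    IsOpen {q : AD X | q.1 ∈ U ∧ q ≠ (x, true)} := by
  refine isOpen_iff.2 fun p ⟨hpU, _⟩ _ => ?_
  by_cases hp : p.1 = x
  · exact ⟨U, hU, hpU, fun q hq => ⟨hq.1, hp ▸ hq.2⟩⟩
  · refine ⟨U \ {x}, hU.sdiff isClosed_singleton, ⟨hpU, hp⟩, fun q hq => ⟨hq.1.1, ?_⟩⟩
    rintro rfl
    exact hq.1.2 rfl

theorem nhds_false [T1Space X] (x : X) :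
    @nhds (AD X) _ (x, false) = comap Prod.fst (𝓝 x) ⊓ 𝓟 {(x, true)}ᶜ := by
  refine le_antisymm ?_ fun V hV => ?_
  · refine (((nhds_basis_opens x).comap _).inf_principal _).ge_iff.2 fun U ⟨hxU, hU⟩ => ?_
    exact (isOpen_punctured hU x).mem_nhds ⟨hxU, Prod.mk_false_ne_mk_true x x⟩
  · obtain ⟨W, hWV, hW, hxW⟩ := mem_nhds_iff.1 hV
    obtain ⟨U, hU, hxU, hUW⟩ := isOpen_iff.1 hW _ hxW rfl
    exact mem_inf_of_inter (preimage_mem_comap (hU.mem_nhds hxU)) (mem_principal_self _)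
      fun q hq => hWV (hUW hq)

theorem tendsto_mk_false [T1Space X] {ι : Type*} {l : Filter ι} {f : ι → X} {y : X}
    (hf : Tendsto f l (𝓝 y)) : Tendsto (fun i => (f i, false)) l (@nhds (AD X) _ (y, false)) := by
  rw [nhds_false]
  exact tendsto_inf.2 ⟨tendsto_comap_iff.2 hf,
    tendsto_principal.2 (Eventually.of_forall fun i => Prod.mk_false_ne_mk_true (f i) y)⟩

end AD

section Retraction

variable {X : Type*} [TopologicalSpace X]

open Classical in
noncomputable def adRetraction (f : X → X) (A : Set X) (p : AD X) : AD X :=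
  if p.2 = true ∧ p.1 ∈ A then p else (f p.1, false)

variable {f g : X → X} {A B : Set X}

theorem adRetraction_of_mem {p : AD X} (hp : p.2 = true ∧ p.1 ∈ A) : adRetraction f A p = p :=
  if_pos hp

theorem adRetraction_of_not_mem {p : AD X} (hp : ¬(p.2 = true ∧ p.1 ∈ A)) :
    adRetraction f A p = (f p.1, false) :=
  if_neg hp

theorem adRetraction_mk_false (x : X) : adRetraction f A (x, false) = (f x, false) :=
  adRetraction_of_not_mem fun h => Bool.false_ne_true h.1

theorem adRetraction_eq_self {p : AD X} (hf : f p.1 = p.1) (hA : p.1 ∈ A) :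
    adRetraction f A p = p := by
  rcases p with ⟨x, _ | _⟩
  · exact (adRetraction_mk_false x).trans (congrArg (·, false) hf)
  · exact adRetraction_of_mem ⟨rfl, hA⟩

theorem eq_of_adRetraction_eq_mk_true {p : AD X} {x : X} (h : adRetraction f A p = (x, true)) :
    p = (x, true) := by
  by_cases hp : p.2 = true ∧ p.1 ∈ A
  · rwa [adRetraction_of_mem hp] at h
  · exact absurd ((adRetraction_of_not_mem hp).symm.trans h) (Prod.mk_false_ne_mk_true _ _)

theorem fst_adRetraction (hA : ∀ a ∈ A, f a = a) (p : AD X) :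
    (adRetraction f A p).1 = f p.1 := by
  by_cases hp : p.2 = true ∧ p.1 ∈ A
  · rw [adRetraction_of_mem hp, hA _ hp.2]
  · rw [adRetraction_of_not_mem hp]

theorem continuous_adRetraction [T1Space X] (hf : Continuous f) (hA : ∀ a ∈ A, f a = a) :
    Continuous (adRetraction f A) := by
  refine continuous_iff_continuousAt.2 ?_
  rintro ⟨x, _ | _⟩
  · unfold ContinuousAt
    rw [adRetraction_mk_false, AD.nhds_false, AD.nhds_false]
    refine tendsto_inf.2 ⟨tendsto_comap_iff.2 ?_, tendsto_principal.2 ?_⟩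
    · exact ((hf.tendsto x).comp (tendsto_comap.mono_left inf_le_left)).congr
        fun q => (fst_adRetraction hA q).symm
    -- The only point of `X × {1}` that can be hit near `(x, 0)` is `(f x, 1)`, and only if `f x ≠ x`.
    · have hne : ∀ᶠ q in comap Prod.fst (𝓝 x) ⊓ 𝓟 {(x, true)}ᶜ, q ≠ (f x, true) := by
        by_cases hfx : f x = x
        · rw [hfx]
          exact mem_inf_of_right (mem_principal_self _)
        · exact mem_inf_of_left (mem_of_superset
            (preimage_mem_comap (compl_singleton_mem_nhds (Ne.symm hfx)))
            fun q hq h => hq (congrArg Prod.fst h))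
      exact hne.mono fun q hq h => hq (eq_of_adRetraction_eq_mk_true h)
  · unfold ContinuousAt
    rw [(isOpen_singleton_iff_nhds_eq_pure _).1 (AD.isOpen_singleton_true x)]
    exact tendsto_pure_nhds _ _

theorem adRetraction_adRetraction_of_subset (hfg : ∀ x, f (g x) = f x) (hAB : A ⊆ B)
    (p : AD X) : adRetraction f A (adRetraction g B p) = adRetraction f A p := by
  by_cases hp : p.2 = true ∧ p.1 ∈ B
  · rw [adRetraction_of_mem hp]
  · have hpA : ¬(p.2 = true ∧ p.1 ∈ A) := fun h => hp ⟨h.1, hAB h.2⟩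
    rw [adRetraction_of_not_mem hp, adRetraction_mk_false, adRetraction_of_not_mem hpA, hfg]

theorem adRetraction_adRetraction_of_superset (hgf : ∀ x, g (f x) = f x) (hAB : A ⊆ B)
    (p : AD X) : adRetraction g B (adRetraction f A p) = adRetraction f A p := by
  by_cases hp : p.2 = true ∧ p.1 ∈ A
  · rw [adRetraction_of_mem hp, adRetraction_of_mem ⟨hp.1, hAB hp.2⟩]
  · rw [adRetraction_of_not_mem hp, adRetraction_mk_false, hgf]

theorem range_adRetraction :
    range (adRetraction f A) = (·, false) '' range f ∪ (·, true) '' A := by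
  ext p
  constructor
  · rintro ⟨q, rfl⟩
    by_cases hq : q.2 = true ∧ q.1 ∈ A
    · exact Or.inr ⟨q.1, hq.2, by rw [adRetraction_of_mem hq, ← hq.1]; rfl⟩
    · exact Or.inl ⟨f q.1, mem_range_self _, (adRetraction_of_not_mem hq).symm⟩
  · rintro (⟨_, ⟨x, rfl⟩, rfl⟩ | ⟨a, ha, rfl⟩)
    exacts [⟨(x, false), adRetraction_mk_false x⟩, ⟨(a, true), adRetraction_of_mem ⟨rfl, ha⟩⟩]

theorem tendsto_adRetraction_self [T1Space X] {ι : Type*} {l : Filter ι} {f : ι → X → X}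
    {A : ι → Set X} {p : AD X} (hf : Tendsto (fun i => f i p.1) l (𝓝 p.1))
    (hA : ∀ᶠ i in l, p.1 ∈ A i) : Tendsto (fun i => adRetraction (f i) (A i) p) l (𝓝 p) := by
  rcases p with ⟨x, _ | _⟩
  · simp only [adRetraction_mk_false]
    exact AD.tendsto_mk_false hf
  · exact tendsto_const_nhds.congr' (hA.mono fun i hi => (adRetraction_of_mem ⟨rfl, hi⟩).symm)

theorem tendsto_adRetraction_iUnion [T1Space X] {f : ℕ → X → X} {g : X → X} {A : ℕ → Set X}
    (hA : Monotone A) (hf : ∀ x, Tendsto (fun n => f n x) atTop (𝓝 (g x))) (p : AD X) :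
    Tendsto (fun n => adRetraction (f n) (A n) p) atTop (𝓝 (adRetraction g (⋃ n, A n) p)) := by
  by_cases hp : p.2 = true ∧ p.1 ∈ ⋃ n, A n
  · obtain ⟨m, hm⟩ := mem_iUnion.1 hp.2
    rw [adRetraction_of_mem hp]
    exact tendsto_const_nhds.congr' ((eventually_ge_atTop m).mono fun n hn =>
      (adRetraction_of_mem ⟨hp.1, hA hn hm⟩).symm)
  · have hpn (n : ℕ) : ¬(p.2 = true ∧ p.1 ∈ A n) := fun h => hp ⟨h.1, mem_iUnion_of_mem n h.2⟩
    simp only [adRetraction_of_not_mem hp, adRetraction_of_not_mem (hpn _)]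
    exact AD.tendsto_mk_false (hf p.1)

end Retraction

section Cosmic

variable {X : Type*} [TopologicalSpace X]

/-- `S` is cosmic: it has a countable network consisting of subsets of `S`. -/
def IsCosmicSet (S : Set X) : Prop :=
  ∃ N : Set (Set X), N.Countable ∧ (∀ M ∈ N, M ⊆ S) ∧
    ∀ x ∈ S, ∀ U : Set X, IsOpen U → x ∈ U → ∃ M ∈ N, x ∈ M ∧ M ⊆ U

theorem Set.Countable.isCosmicSet {S : Set X} (hS : S.Countable) : IsCosmicSet S :=
  ⟨(fun x => {x}) '' S, hS.image _, by rintro _ ⟨x, hx, rfl⟩; exact singleton_subset_iff.2 hx,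
    fun x hx _ _ hxU => ⟨{x}, mem_image_of_mem _ hx, rfl, singleton_subset_iff.2 hxU⟩⟩

theorem IsCosmicSet.union {S T : Set X} (hS : IsCosmicSet S) (hT : IsCosmicSet T) :
    IsCosmicSet (S ∪ T) := by
  obtain ⟨N, hNc, hNS, hN⟩ := hS
  obtain ⟨N', hN'c, hN'T, hN'⟩ := hT
  refine ⟨N ∪ N', hNc.union hN'c, ?_, ?_⟩
  · rintro M (hM | hM)
    exacts [(hNS M hM).trans subset_union_left, (hN'T M hM).trans subset_union_right]
  · rintro x (hx | hx) U hU hxU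
    · obtain ⟨M, hM, hxM, hMU⟩ := hN x hx U hU hxU
      exact ⟨M, Or.inl hM, hxM, hMU⟩
    · obtain ⟨M, hM, hxM, hMU⟩ := hN' x hx U hU hxU
      exact ⟨M, Or.inr hM, hxM, hMU⟩

theorem AD.isCosmicSet_image_mk_false {S : Set X} (hS : IsCosmicSet S) :
    IsCosmicSet (X := AD X) ((·, false) '' S) := by
  obtain ⟨N, hNc, hNS, hN⟩ := hS
  refine ⟨image (·, false) '' N, hNc.image _, ?_, ?_⟩
  · rintro _ ⟨M, hM, rfl⟩
    exact image_mono (hNS M hM)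
  · rintro _ ⟨x, hx, rfl⟩ V hV hxV
    obtain ⟨U, hU, hxU, hUV⟩ := AD.isOpen_iff.1 hV _ hxV rfl
    obtain ⟨M, hM, hxM, hMU⟩ := hN x hx U hU hxU
    refine ⟨_, mem_image_of_mem _ hM, mem_image_of_mem _ hxM, ?_⟩
    rintro _ ⟨y, hy, rfl⟩
    exact hUV ⟨hMU hy, Prod.mk_false_ne_mk_true _ _⟩

theorem isCosmicSet_range_adRetraction {f : X → X} {A : Set X} (hf : IsCosmicSet (range f))
    (hA : A.Countable) : IsCosmicSet (range (adRetraction f A)) := by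
  rw [range_adRetraction]
  exact (AD.isCosmicSet_image_mk_false hf).union (hA.image _).isCosmicSet

end Cosmic

section Skeleton

variable {X : Type*} {Γ : Type*} [PartialOrder Γ] {r : Γ → X → X}

abbrev ADIndex (r : Γ → X → X) : Type _ := {p : Γ × CtbSet X // ∀ a ∈ p.2.1, r p.1 a = a}

theorem ADIndex.le_iff {γ δ : ADIndex r} : γ ≤ δ ↔ γ.1.1 ≤ δ.1.1 ∧ γ.1.2.1 ⊆ δ.1.2.1 :=
  Iff.rfl

theorem ADIndex.tendsto_fst : Tendsto (fun γ : ADIndex r => γ.1.1) atTop atTop :=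
  tendsto_atTop_atTop_of_monotone (fun _ _ h => (ADIndex.le_iff.1 h).1)
    fun s => ⟨⟨(s, ⟨∅, countable_empty⟩), fun _ h => absurd h (notMem_empty _)⟩, le_rfl⟩

variable [TopologicalSpace X]

noncomputable def adSkeleton (r : Γ → X → X) (γ : ADIndex r) : AD X → AD X :=
  adRetraction (r γ.1.1) γ.1.2.1

namespace IsRSkeleton

variable (hr : IsRSkeleton r)
include hr

theorem map_eq_self_of_mem_range {s : Γ} {x : X} (hx : x ∈ range (r s)) : r s x = x := by
  obtain ⟨y, rfl⟩ := hx
  exact hr.retract s y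

theorem map_eq_self_of_le {s t : Γ} (hst : s ≤ t) {x : X} (hx : r s x = x) : r t x = x := by
  simpa only [hx] using hr.comm₂ s t hst x

theorem exists_adIndex_mem {s : Γ} {x : X} (hx : x ∈ range (r s)) :
    ∃ γ : ADIndex r, x ∈ γ.1.2.1 :=
  ⟨⟨(s, ⟨{x}, countable_singleton x⟩), by rintro a rfl; exact hr.map_eq_self_of_mem_range hx⟩,
    rfl⟩

theorem exists_adIndex_ge (γ δ : ADIndex r) : ∃ ε : ADIndex r, γ ≤ ε ∧ δ ≤ ε := by
  obtain ⟨u, hsu, htu⟩ := hr.directed γ.1.1 δ.1.1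
  refine ⟨⟨(u, ⟨_, γ.1.2.2.union δ.1.2.2⟩), ?_⟩, ⟨hsu, subset_union_left⟩,
    ⟨htu, subset_union_right⟩⟩
  rintro a (ha | ha)
  exacts [hr.map_eq_self_of_le hsu (γ.2 a ha), hr.map_eq_self_of_le htu (δ.2 a ha)]

theorem exists_isLUB_adIndex {γ : ℕ → ADIndex r} {t : Γ}
    (ht : IsLUB (range fun n => (γ n).1.1) t) :
    ∃ δ : ADIndex r, δ.1.1 = t ∧ δ.1.2.1 = ⋃ n, (γ n).1.2.1 ∧ IsLUB (range γ) δ := by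
  refine ⟨⟨(t, ⟨⋃ n, (γ n).1.2.1, countable_iUnion fun n => (γ n).1.2.2⟩), ?_⟩, rfl, rfl, ?_, ?_⟩
  · intro a ha
    obtain ⟨n, ha⟩ := mem_iUnion.1 ha
    exact hr.map_eq_self_of_le (ht.1 ⟨n, rfl⟩) ((γ n).2 a ha)
  · rintro _ ⟨n, rfl⟩
    exact ⟨ht.1 ⟨n, rfl⟩, subset_iUnion (fun n => (γ n).1.2.1) n⟩
  · intro δ hδ
    exact ⟨ht.2 (by rintro _ ⟨n, rfl⟩; exact (hδ ⟨n, rfl⟩).1),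
      iUnion_subset fun n => (hδ ⟨n, rfl⟩).2⟩

theorem tendsto_adSkeleton [T1Space X] {γ : ℕ → ADIndex r} {δ : ADIndex r} (hγ : Monotone γ)
    (hδ : IsLUB (range γ) δ) (p : AD X) :
    Tendsto (fun n => adSkeleton r (γ n) p) atTop (𝓝 (adSkeleton r δ p)) := by
  have hγ₁ : Monotone fun n => (γ n).1.1 := fun m n h => (ADIndex.le_iff.1 (hγ h)).1
  obtain ⟨t, ht⟩ := hr.sigma _ hγ₁
  obtain ⟨δ', rfl, hδ'A, hδ'⟩ := hr.exists_isLUB_adIndex ht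
  obtain rfl := hδ.unique hδ'
  unfold adSkeleton
  rw [hδ'A]
  exact tendsto_adRetraction_iUnion (fun m n h => (ADIndex.le_iff.1 (hγ h)).2)
    (hr.chain _ _ hγ₁ ht) p

end IsRSkeleton

theorem IsFullRSkeleton.adSkeleton [T1Space X] (hr : IsFullRSkeleton r) :
    IsFullRSkeleton (adSkeleton r) := by
  obtain ⟨hr, hfull⟩ := hr
  have hmem (x : X) : ∃ γ : ADIndex r, x ∈ γ.1.2.1 :=
    let ⟨_, hs⟩ := hfull x
    hr.exists_adIndex_mem hs
  refine ⟨⟨hr.exists_adIndex_ge, fun γ hγ => ?_, fun γ => continuous_adRetraction (hr.cont _) γ.2,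
    fun γ => adRetraction_adRetraction_of_subset (hr.retract _) subset_rfl,
    fun γ => isCosmicSet_range_adRetraction (hr.cosmic _) γ.1.2.2,
    fun γ δ h => adRetraction_adRetraction_of_subset (hr.comm₁ _ _ h.1) h.2,
    fun γ δ h => adRetraction_adRetraction_of_superset (hr.comm₂ _ _ h.1) h.2,
    fun γ δ hγ hδ => hr.tendsto_adSkeleton hγ hδ, fun p => ?_⟩, fun p => ?_⟩
  · obtain ⟨t, ht⟩ := hr.sigma _ fun m n h => (ADIndex.le_iff.1 (hγ h)).1
    obtain ⟨δ, -, -, hδ⟩ := hr.exists_isLUB_adIndex ht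
    exact ⟨δ, hδ⟩
  · obtain ⟨γ, hγ⟩ := hmem p.1
    exact tendsto_adRetraction_self ((hr.toId p.1).comp ADIndex.tendsto_fst)
      ((eventually_ge_atTop γ).mono fun δ h => (ADIndex.le_iff.1 h).2 hγ)
  · obtain ⟨γ, hγ⟩ := hmem p.1
    exact ⟨γ, p, adRetraction_eq_self (γ.2 _ hγ) hγ⟩

end Skeleton

theorem hasFullRSkeleton_AD (X : Type u) [TopologicalSpace X] [T35Space X]
    (h : HasFullRSkeleton X) : HasFullRSkeleton (AD X) := by
  obtain ⟨Γ, _, r, hr⟩ := h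
  exact ⟨ADIndex r, inferInstance, adSkeleton r, hr.adSkeleton⟩
end

section
/- If X is a monotonically retractable space, then its Alexandroff duplicate AD(X) is also monotonically retractable. -/
open Filter Topology Set

universe u v

/-! For countable `A ⊆ AD X` with projection `A'` to `X`, retract `AD X` by fixing the isolated
points `(a, true)`, `a ∈ A'`, and sending every other `(x, i)` to `(r_{A'} x, false)`. As
`A' ⊆ r_{A'}(X)`, the first coordinate of the image is always `r_{A'} x`, whence continuity. The
singletons `{(a, true)}` together with `M × 2` and `M × 2 \ {(a, true)}` for `M ∈ N(A')`, `a ∈ A'`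
form a network of this retraction; it is built from `A'` and `N(A')` alone, hence `ω`-monotone. -/

section Duplicate

variable {X : Type u}

open Classical in
noncomputable def dupRetraction (ρ : X → X) (B : Set X) (p : X × Bool) : X × Bool :=
  if p.2 = true ∧ p.1 ∈ B then p else (ρ p.1, false)

def dupNet (N : Set (Set X)) (B : Set X) : Set (Set (X × Bool)) :=
  (fun b => {(b, true)}) '' B ∪ (fun M => M ×ˢ univ) '' N ∪
    (fun Mb : Set X × X => Mb.1 ×ˢ univ \ {(Mb.2, true)}) '' (N ×ˢ B)

variable {ρ : X → X} {B : Set X}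

lemma dupRetraction_of_mem {p : X × Bool} (hp : p.2 = true ∧ p.1 ∈ B) :
    dupRetraction ρ B p = p :=
  if_pos hp

lemma dupRetraction_of_notMem {p : X × Bool} (hp : ¬(p.2 = true ∧ p.1 ∈ B)) :
    dupRetraction ρ B p = (ρ p.1, false) :=
  if_neg hp

lemma dupRetraction_fst (hB : ∀ b ∈ B, ρ b = b) (p : X × Bool) :
    (dupRetraction ρ B p).1 = ρ p.1 := by
  by_cases hp : p.2 = true ∧ p.1 ∈ B
  · rw [dupRetraction_of_mem hp, hB _ hp.2]
  · rw [dupRetraction_of_notMem hp]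

lemma dupRetraction_eq_mk_true {p : X × Bool} {z : X} (h : dupRetraction ρ B p = (z, true)) :
    p = (z, true) ∧ z ∈ B := by
  by_cases hp : p.2 = true ∧ p.1 ∈ B
  · rw [dupRetraction_of_mem hp] at h
    exact ⟨h, by simpa [h] using hp.2⟩
  · rw [dupRetraction_of_notMem hp] at h
    simp at h

lemma dupRetraction_mem_basic (hB : ∀ b ∈ B, ρ b = b) {U : Set X} {z : X} {p : X × Bool}
    (hU : ρ p.1 ∈ U) (hp : ¬(p = (z, true) ∧ z ∈ B)) :
    dupRetraction ρ B p ∈ {q : X × Bool | q.1 ∈ U ∧ q ≠ (z, true)} :=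
  ⟨(dupRetraction_fst hB p).symm ▸ hU, fun h => hp (dupRetraction_eq_mk_true h)⟩

lemma dupRetraction_idem (hρ : ∀ x, ρ (ρ x) = ρ x) (p : X × Bool) :
    dupRetraction ρ B (dupRetraction ρ B p) = dupRetraction ρ B p := by
  by_cases hp : p.2 = true ∧ p.1 ∈ B
  · rw [dupRetraction_of_mem hp, dupRetraction_of_mem hp]
  · rw [dupRetraction_of_notMem hp, dupRetraction_of_notMem (by simp), hρ]

lemma mem_range_dupRetraction (hB : ∀ b ∈ B, ρ b = b) {p : X × Bool} (hp : p.1 ∈ B) :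
    p ∈ range (dupRetraction ρ B) := by
  refine ⟨p, ?_⟩
  rcases p with ⟨x, _ | _⟩
  · rw [dupRetraction_of_notMem (by simp), hB x hp]
  · exact dupRetraction_of_mem ⟨rfl, hp⟩

lemma dupNet_countable {N : Set (Set X)} (hN : N.Countable) (hB : B.Countable) :
    (dupNet N B).Countable :=
  ((hB.image _).union (hN.image _)).union ((hN.prod hB).image _)

lemma dupNet_mono {N N' : Set (Set X)} {B' : Set X} (hN : N ⊆ N') (hB : B ⊆ B') :
    dupNet N B ⊆ dupNet N' B' :=
  union_subset_union (union_subset_union (image_mono hB) (image_mono hN))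
    (image_mono (prod_mono hN hB))

lemma dupNet_iUnion {ι : Type*} [SemilatticeSup ι] {N : ι → Set (Set X)} {B : ι → Set X}
    (hN : Monotone N) (hB : Monotone B) :
    dupNet (⋃ i, N i) (⋃ i, B i) = ⋃ i, dupNet (N i) (B i) := by
  simp only [dupNet, ← iUnion_prod_of_monotone hN hB, image_iUnion, iUnion_union_distrib]

variable [TopologicalSpace X]

lemma AD.isOpen_iff_s8 {V : Set (X × Bool)} :
    IsOpen (X := AD X) V ↔ ∀ p ∈ V, p.2 = false →
      ∃ U : Set X, IsOpen U ∧ p.1 ∈ U ∧ {q : X × Bool | q.1 ∈ U ∧ q ≠ (p.1, true)} ⊆ V :=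
  Iff.rfl

lemma continuous_dupRetraction [T1Space X] (hρ : Continuous ρ) (hB : ∀ b ∈ B, ρ b = b) :
    Continuous (X := AD X) (Y := AD X) (dupRetraction ρ B) := by
  refine continuous_def.mpr fun V hV p hp hp2 => ?_
  have hRp : dupRetraction ρ B p = (ρ p.1, false) := dupRetraction_of_notMem (by simp [hp2])
  obtain ⟨U, hU, hρpU, hUV⟩ := AD.isOpen_iff_s8.mp hV _ (hRp ▸ mem_preimage.mp hp) rfl
  -- Removing `ρ x` (when it differs from `x`) keeps `(ρ x, true)` out of the neighbourhood.
  refine ⟨ρ ⁻¹' U \ ({ρ p.1} \ {p.1}), (hU.preimage hρ).sdiff (toFinite _).isClosed,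
    ⟨hρpU, fun h => h.2 rfl⟩, fun q ⟨hqW, hqp⟩ => hUV (dupRetraction_mem_basic hB hqW.1 ?_)⟩
  rintro ⟨rfl, -⟩
  exact hqp (by simpa using hqW.2)

lemma isNetworkOfMap_dupNet {N : Set (Set X)} (hN : IsNetworkOfMap N ρ)
    (hB : ∀ b ∈ B, ρ b = b) :
    IsNetworkOfMap (Y := AD X) (dupNet N B) (dupRetraction ρ B) := by
  intro p V hV hpV
  by_cases hp : p.2 = true ∧ p.1 ∈ B
  · refine ⟨{p}, Or.inl (Or.inl ⟨p.1, hp.2, congrArg _ (Prod.ext rfl hp.1.symm)⟩), rfl, ?_⟩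
    rintro _ ⟨q, rfl, rfl⟩
    exact hpV
  rw [dupRetraction_of_notMem hp] at hpV
  obtain ⟨U, hU, hρpU, hUV⟩ := AD.isOpen_iff_s8.mp hV _ hpV rfl
  obtain ⟨M, hM, hpM, hMU⟩ := hN p.1 U hU hρpU
  have hMV : ∀ q ∈ M ×ˢ (univ : Set Bool), ¬(q = (ρ p.1, true) ∧ ρ p.1 ∈ B) →
      dupRetraction ρ B q ∈ V := fun q hq hq' =>
    hUV (dupRetraction_mem_basic hB (hMU (mem_image_of_mem ρ hq.1)) hq')
  by_cases hρpB : ρ p.1 ∈ B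
  · refine ⟨M ×ˢ univ \ {(ρ p.1, true)}, Or.inr ⟨(M, ρ p.1), ⟨hM, hρpB⟩, rfl⟩,
      ⟨⟨hpM, trivial⟩, fun h => hp ⟨congrArg Prod.snd h, congrArg Prod.fst h ▸ hρpB⟩⟩,
      image_subset_iff.mpr fun q hq => hMV q hq.1 fun h => hq.2 h.1⟩
  · exact ⟨M ×ˢ univ, Or.inl (Or.inr ⟨M, hM, rfl⟩), ⟨hpM, trivial⟩,
      image_subset_iff.mpr fun q hq => hMV q hq fun h => hρpB h.2⟩

end Duplicate

section OmegaMonotone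

variable {X Y Z : Type*}

lemma OmegaMonotone.comp {φ : CtbSet Y → CtbSet Z} {ψ : CtbSet X → CtbSet Y}
    (hφ : OmegaMonotone φ) (hψ : OmegaMonotone ψ) : OmegaMonotone (φ ∘ ψ) :=
  ⟨fun _ _ h => hφ.1 _ _ (hψ.1 _ _ h), fun A B hA hB =>
    hφ.2 (ψ ∘ A) (ψ B) (fun n => hψ.1 _ _ (hA n)) (hψ.2 A B hA hB)⟩

def ctbImage (f : X → Y) (A : CtbSet X) : CtbSet Y :=
  ⟨f '' A.1, A.2.image f⟩

lemma omegaMonotone_ctbImage (f : X → Y) : OmegaMonotone (ctbImage f) :=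
  ⟨fun _ _ h => image_mono h, fun _ _ _ hB => by simp only [ctbImage, hB, image_iUnion]⟩

def ctbDupNet (N : CtbSet X → CtbSet (Set X)) (A : CtbSet X) : CtbSet (Set (X × Bool)) :=
  ⟨dupNet (N A).1 A.1, dupNet_countable (N A).2 A.2⟩

lemma OmegaMonotone.ctbDupNet {N : CtbSet X → CtbSet (Set X)} (hN : OmegaMonotone N) :
    OmegaMonotone (ctbDupNet N) := by
  refine ⟨fun A B h => dupNet_mono (hN.1 A B h) h, fun A B hA hB => ?_⟩
  have hAm : Monotone fun n => (A n).1 := monotone_nat_of_le_succ hA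
  simp only [_root_.ctbDupNet, hN.2 A B hA hB, hB]
  exact dupNet_iUnion (fun _ _ h => hN.1 _ _ (hAm h)) hAm

end OmegaMonotone

theorem monotonicallyRetractable_AD (X : Type u) [TopologicalSpace X] [T35Space X]
    (h : MonotonicallyRetractable X) : MonotonicallyRetractable (AD X) := by
  obtain ⟨r, N, hw⟩ := h
  set π : CtbSet (AD X) → CtbSet X := ctbImage Prod.fst
  have hfix : ∀ A, ∀ b ∈ (π A).1, r (π A) b = b := fun A b hb => by
    obtain ⟨y, rfl⟩ := hw.sub _ hb
    exact hw.retract _ y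
  exact ⟨fun A => dupRetraction (r (π A)) (π A).1, ctbDupNet N ∘ π,
    fun A => continuous_dupRetraction (hw.cont _) (hfix A),
    fun A => dupRetraction_idem (hw.retract _),
    fun A p hp => mem_range_dupRetraction (hfix A) ⟨p, hp, rfl⟩,
    fun A => isNetworkOfMap_dupNet (hw.network _) (hfix A),
    hw.mono.ctbDupNet.comp (omegaMonotone_ctbImage _)⟩
end

section
/- Let K be an infinite subspace of a space X and Γ an up-directed σ-complete poset. Suppose that to each s ∈ Γ are assigned a countable set M(s) ⊆ C_p(X) and a countable set N(s) ⊆ K such that: (a) M and N are ω-monotone; (b) K = ⋃_{s∈Γ} N(s) = ⋃_{s∈Γ} cl_X(N(s)); and (c) the diagonal map Δ_{M(s)} : X → ℝ^{M(s)} maps cl(N(s)) homeomorphically onto Δ_{M(s)}(K). Then K has a full r-skeleton. -/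
open Filter Topology Set

universe u v

theorem hasFullRSkeleton_of_diag {X : Type u} [TopologicalSpace X] [T35Space X]
    (K : Set X) (hKinf : K.Infinite)
    {Γ : Type u} [PartialOrder Γ]
    (hdir : ∀ s t : Γ, ∃ u, s ≤ u ∧ t ≤ u)
    (hsig : ∀ s : ℕ → Γ, Monotone s → ∃ t, IsLUB (Set.range s) t)
    (M : Γ → Set (Cp X)) (N : Γ → Set X)
    (hMc : ∀ s, (M s).Countable) (hNc : ∀ s, (N s).Countable) (hNK : ∀ s, N s ⊆ K)
    (hMmono : OmegaMonotoneIdx M) (hNmono : OmegaMonotoneIdx N)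
    (hcov1 : (⋃ s, N s) = K) (hcov2 : (⋃ s, closure (N s)) = K)
    (himg : ∀ s, cpDiag (M s) '' closure (N s) = cpDiag (M s) '' K)
    (hemb : ∀ s, IsEmbedding fun x : ↥(closure (N s)) => cpDiag (M s) x.1) :
    HasFullRSkeleton ↥K := by
  classical
  have hclK : ∀ s, closure (N s) ⊆ K := by
    intro s
    rw [← hcov2]
    exact subset_iUnion (fun s => closure (N s)) s
  have huniq : ∀ s, ∀ a b : X, a ∈ closure (N s) → b ∈ closure (N s) →
      cpDiag (M s) a = cpDiag (M s) b → a = b := by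
    intro s a b ha hb h
    have h2 : (⟨a, ha⟩ : ↥(closure (N s))) = ⟨b, hb⟩ := (hemb s).injective (by exact h)
    exact congrArg Subtype.val h2
  have hex : ∀ (s : Γ) (x : ↥K), ∃ z : X, z ∈ closure (N s) ∧
      cpDiag (M s) z = cpDiag (M s) x.1 := by
    intro s x
    have hm : cpDiag (M s) x.1 ∈ cpDiag (M s) '' K := ⟨x.1, x.2, rfl⟩
    rw [← himg s] at hm
    obtain ⟨z, hz, hze⟩ := hm
    exact ⟨z, hz, hze⟩
  choose y hycl hyeq using hex
  set r : Γ → ↥K → ↥K := fun s x => ⟨y s x, hclK s (hycl s x)⟩ with hrdef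
  have hfix : ∀ s (x : ↥K), x.1 ∈ closure (N s) → r s x = x := by
    intro s x hx
    exact Subtype.ext (huniq s (y s x) x.1 (hycl s x) hx (hyeq s x))
  have hcont : ∀ s, Continuous (r s) := by
    intro s
    have h1 : Continuous (fun x : ↥K => (⟨y s x, hycl s x⟩ : ↥(closure (N s)))) := by
      rw [(hemb s).continuous_iff]
      have heq : ((fun z : ↥(closure (N s)) => cpDiag (M s) z.1) ∘
          fun x : ↥K => (⟨y s x, hycl s x⟩ : ↥(closure (N s)))) =
          (fun x : ↥K => cpDiag (M s) x.1) := by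
        funext x; exact hyeq s x
      rw [heq]
      exact continuous_pi fun f => f.1.2.comp continuous_subtype_val
    exact (continuous_subtype_val.comp h1).subtype_mk _
  have hrange : ∀ s (x : ↥K), x ∈ Set.range (r s) ↔ x.1 ∈ closure (N s) := by
    intro s x
    constructor
    · rintro ⟨x', rfl⟩; exact hycl s x'
    · intro hx; exact ⟨x, hfix s x hx⟩
  refine ⟨Γ, inferInstance, r, ⟨?_, ?_, ?_, ?_, ?_, ?_, ?_, ?_, ?_⟩, ?_⟩
  · exact hdir
  · exact hsig
  · exact hcont
  · intro s x
    exact hfix s (r s x) (hycl s x)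
  · -- cosmic
    intro s
    haveI : Countable ↥(M s) := (hMc s).to_subtype
    haveI : SecondCountableTopology ↥(closure (N s)) :=
      (hemb s).secondCountableTopology
    obtain ⟨B, hBc, _, hB⟩ :=
      TopologicalSpace.exists_countable_basis ↥(closure (N s))
    set j : ↥(closure (N s)) → ↥K := fun z => ⟨z.1, hclK s z.2⟩ with hjdef
    have hjc : Continuous j := continuous_subtype_val.subtype_mk _
    refine ⟨(fun b => j '' b) '' B, hBc.image _, ?_, ?_⟩
    · rintro _ ⟨b, _, rfl⟩ x ⟨z, _, rfl⟩
      exact (hrange s (j z)).2 z.2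
    · intro x hx U hU hxU
      have hxcl : x.1 ∈ closure (N s) := (hrange s x).1 hx
      have hopen : IsOpen (j ⁻¹' U) := hU.preimage hjc
      have hmem : (⟨x.1, hxcl⟩ : ↥(closure (N s))) ∈ j ⁻¹' U := by
        have hjx : j ⟨x.1, hxcl⟩ = x := Subtype.ext rfl
        simpa [Set.mem_preimage, hjx] using hxU
      obtain ⟨b, hbB, hzb, hbU⟩ := hB.exists_subset_of_mem_open hmem hopen
      refine ⟨j '' b, ⟨b, hbB, rfl⟩, ⟨⟨x.1, hxcl⟩, hzb, Subtype.ext rfl⟩, ?_⟩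
      rintro _ ⟨z, hz, rfl⟩
      exact hbU hz
  · -- comm₁
    intro s t hst x
    have h1 : cpDiag (M s) (y t x) = cpDiag (M s) x.1 := by
      funext f
      exact congrFun (hyeq t x) ⟨f.1, hMmono.1 s t hst f.2⟩
    apply Subtype.ext
    refine huniq s _ _ (hycl s (r t x)) (hycl s x) ?_
    rw [hyeq s (r t x), hyeq s x]
    exact h1
  · -- comm₂
    intro s t hst x
    exact hfix t (r s x) (closure_mono (hNmono.1 s t hst) (hycl s x))
  · -- chain
    intro sn t hmon hlub x
    have hMt : M t = ⋃ n, M (sn n) := hMmono.2 sn t hmon hlub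
    have hsub : ∀ n, closure (N (sn n)) ⊆ closure (N t) :=
      fun n => closure_mono (hNmono.1 _ _ (hlub.1 ⟨n, rfl⟩))
    set Yn : ℕ → ↥(closure (N t)) := fun n => ⟨y (sn n) x, hsub n (hycl _ x)⟩ with hYn
    set Y : ↥(closure (N t)) := ⟨y t x, hycl t x⟩ with hY
    have key : Tendsto Yn atTop (𝓝 Y) := by
      rw [(hemb t).tendsto_nhds_iff]
      rw [tendsto_pi_nhds]
      intro f
      obtain ⟨n₀, hn₀⟩ : ∃ n, f.1 ∈ M (sn n) := by
        have hf : f.1 ∈ ⋃ n, M (sn n) := by rw [← hMt]; exact f.2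
        exact mem_iUnion.1 hf
      refine Tendsto.congr' ?_ tendsto_const_nhds
      filter_upwards [eventually_ge_atTop n₀] with n hn
      show f.1.1 (y t x) = f.1.1 (y (sn n) x)
      calc f.1.1 (y t x) = f.1.1 x.1 := congrFun (hyeq t x) f
        _ = f.1.1 (y (sn n) x) :=
          (congrFun (hyeq (sn n) x) ⟨f.1, hMmono.1 _ _ (hmon hn) hn₀⟩).symm
    have hjc : Continuous (fun z : ↥(closure (N t)) => (⟨z.1, hclK t z.2⟩ : ↥K)) :=
      continuous_subtype_val.subtype_mk _
    exact (hjc.tendsto Y).comp key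
  · -- toId
    intro x
    have hxm : x.1 ∈ ⋃ s, closure (N s) := by rw [hcov2]; exact x.2
    obtain ⟨s₀, hs₀⟩ := mem_iUnion.1 hxm
    refine tendsto_const_nhds.congr' ?_
    filter_upwards [eventually_ge_atTop s₀] with s hs
    exact (hfix s x (closure_mono (hNmono.1 _ _ hs) hs₀)).symm
  · -- full
    intro x
    have hxm : x.1 ∈ ⋃ s, closure (N s) := by rw [hcov2]; exact x.2
    obtain ⟨s₀, hs₀⟩ := mem_iUnion.1 hxm
    exact ⟨s₀, (hrange s₀ x).2 hs₀⟩
end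

section
/- Assume the families {q_s : X → X_s | s ∈ Γ} and {D_s : s ∈ Γ} form a q-skeleton on X. If K ⊆ ⋃_{s∈Γ} q_s*(C_p(X_s)) ⊆ C_p(X) is countably compact, then K has a full r-skeleton. -/
open Filter Topology Set

universe u v

/-!
Call an index `s` admissible when every `f ∈ K` agrees on `D_s` with some `g ∈ K` factoring
through `q_s`. Such a `g` is unique: as `q_s` is `ℝ`-quotient, `g` descends to a continuous
function on `X_s`, which is determined by its values on the dense set `q_s(D_s)`. Sending `f` to
`g` is the retraction `r_s`, whose range `K_s` is the set of elements of `K` factoring through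
`q_s`.

The rest is countable compactness of `K`. The closed set `K_s` is countably compact, so the
restriction map `K_s → ℝ^{D_s}`, a continuous injection into a second countable space, is a
closed embedding; this gives continuity of `r_s`, countable networks for its range and
continuity along `ω`-chains. Cluster points of sequences in `K` show that admissible indices are
closed under suprema of `ω`-chains, and, closing off along a chain in which each step makes a
countable dense set of traces on `D_s` factor through a larger index, that they are cofinal.
-/

open Function TopologicalSpace

theorem Continuous.isClosedEmbedding_of_countablyCompactSpace {α β : Type*}
    [TopologicalSpace α] [TopologicalSpace β] [CountablyCompactSpace α]
    [HereditarilyLindelofSpace β] [T2Space β] {f : α → β} (hf : Continuous f)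
    (hinj : Injective f) : IsClosedEmbedding f :=
  .of_continuous_injective_isClosedMap hf hinj fun _ hZ =>
    (hZ.isCountablyCompact.image hf).isCompact.isClosed

theorem exists_countable_network_of_secondCountableTopology {α : Type*} [TopologicalSpace α]
    (Y : Set α) [SecondCountableTopology Y] :
    ∃ N : Set (Set α), N.Countable ∧ (∀ M ∈ N, M ⊆ Y) ∧
      ∀ x ∈ Y, ∀ U : Set α, IsOpen U → x ∈ U → ∃ M ∈ N, x ∈ M ∧ M ⊆ U := by
  refine ⟨(Subtype.val '' ·) '' countableBasis Y, (countable_countableBasis Y).image _,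
    fun M ⟨b, _, hb⟩ => hb ▸ Subtype.coe_image_subset Y b, fun x hx U hU hxU => ?_⟩
  obtain ⟨b, hb, hxb, hbU⟩ := (isBasis_countableBasis Y).exists_subset_of_mem_open
    (a := ⟨x, hx⟩) hxU (hU.preimage continuous_subtype_val)
  exact ⟨_, mem_image_of_mem _ hb, mem_image_of_mem _ hxb, image_subset_iff.2 hbU⟩

theorem bddAbove_range_of_directed_of_isLUB {Γ : Type*} [Preorder Γ]
    (hdir : ∀ s t : Γ, ∃ u, s ≤ u ∧ t ≤ u)
    (hsig : ∀ c : ℕ → Γ, Monotone c → ∃ t, IsLUB (range c) t) (g : ℕ → Γ) :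
    BddAbove (range g) := by
  choose ub le_ub_left le_ub_right using hdir
  let c : ℕ → Γ := fun n => Nat.rec (g 0) (fun n b => ub b (g (n + 1))) n
  obtain ⟨t, ht⟩ := hsig c (monotone_nat_of_le_succ fun n => le_ub_left _ _)
  have hgc : ∀ n, g n ≤ c n
    | 0 => le_rfl
    | n + 1 => le_ub_right _ _
  exact ⟨t, forall_mem_range.2 fun n => (hgc n).trans (ht.1 (mem_range_self n))⟩

theorem RQuotient.eq_of_eqOn {X Y : Type*} [TopologicalSpace X] [TopologicalSpace Y]
    {q : X → Y} (hq : RQuotient q) {D : Set X} (hD : Dense (q '' D)) {f g : X → ℝ}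
    (hf : Continuous f) (hg : Continuous g) (hfq : f.FactorsThrough q)
    (hgq : g.FactorsThrough q) (hfg : EqOn f g D) : f = g := by
  have hext : extend q f 0 = extend q g (0 : Y → ℝ) := by
    refine Continuous.ext_on hD (hq.2.2 _ ?_) (hq.2.2 _ ?_) ?_
    · rwa [hfq.extend_comp]
    · rwa [hgq.extend_comp]
    · rintro _ ⟨x, hx, rfl⟩
      rw [hfq.extend_apply, hgq.extend_apply, hfg hx]
  rw [← hfq.extend_comp (0 : Y → ℝ), hext, hgq.extend_comp]

theorem Cp.continuous_eval_subtype {X : Type u} [TopologicalSpace X] {K : Set (Cp X)} (a : X) :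
    Continuous fun x : K => x.1.1 a :=
  (continuous_apply a).comp (continuous_subtype_val.comp continuous_subtype_val)

namespace QSkeleton

variable {X : Type u} [TopologicalSpace X] {Γ : Type v} [PartialOrder Γ] (S : QSkeleton X Γ)
  (K : Set (Cp X))

def factorSet (s : Γ) : Set K := {x | x.1.1.FactorsThrough (S.q s)}

def trace (s : Γ) (x : K) : S.D s → ℝ := (S.D s).domRestrict x.1.1

def Admissible (s : Γ) : Prop :=
  ∀ x : K, ∃ y ∈ S.factorSet K s, EqOn y.1.1 x.1.1 (S.D s)

variable {S K}

theorem continuous_trace (s : Γ) : Continuous (S.trace K s) :=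
  continuous_pi fun d => Cp.continuous_eval_subtype d.1

theorem factorSet_mono {s t : Γ} (hst : s ≤ t) : S.factorSet K s ⊆ S.factorSet K t := by
  obtain ⟨p, -, -, hp⟩ := S.proj s t hst
  exact fun x hx a b hab => hx (by rw [hp, hp, hab])

theorem isClosed_factorSet (s : Γ) : IsClosed (S.factorSet K s) := by
  simp only [factorSet, FactorsThrough, ofPred_forall]
  exact isClosed_iInter fun a => isClosed_iInter fun b => isClosed_iInter fun _ =>
    isClosed_eq (Cp.continuous_eval_subtype a) (Cp.continuous_eval_subtype b)

theorem eq_of_eqOn {s : Γ} {x y : K} (hx : x ∈ S.factorSet K s) (hy : y ∈ S.factorSet K s)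
    (hxy : EqOn x.1.1 y.1.1 (S.D s)) : x = y := by
  let _ := S.top s
  exact Subtype.ext (Subtype.ext ((S.rquot s).eq_of_eqOn (S.dense s) x.1.2 y.1.2 hx hy hxy))

section Retraction

variable {s : Γ} (hs : S.Admissible K s)

noncomputable def retraction (x : K) : K := (hs x).choose

theorem retraction_mem (x : K) : retraction hs x ∈ S.factorSet K s := (hs x).choose_spec.1

theorem eqOn_retraction (x : K) : EqOn (retraction hs x).1.1 x.1.1 (S.D s) :=
  (hs x).choose_spec.2

theorem retraction_eq_self {x : K} (hx : x ∈ S.factorSet K s) : retraction hs x = x :=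
  eq_of_eqOn (retraction_mem hs x) hx (eqOn_retraction hs x)

theorem range_retraction : range (retraction hs) = S.factorSet K s :=
  Subset.antisymm (range_subset_iff.2 (retraction_mem hs)) fun x hx =>
    ⟨x, retraction_eq_self hs hx⟩

end Retraction

variable [CountablyCompactSpace K]

theorem isClosedEmbedding_trace (s : Γ) :
    IsClosedEmbedding fun x : S.factorSet K s => S.trace K s x := by
  have := (S.D_ctble s).to_subtype
  have := isCountablyCompact_iff_countablyCompactSpace.1
    (S.isClosed_factorSet (K := K) s).isCountablyCompact
  exact ((continuous_trace s).comp continuous_subtype_val)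
    |>.isClosedEmbedding_of_countablyCompactSpace fun x y hxy =>
      Subtype.ext (eq_of_eqOn x.2 y.2 (domRestrict_eq_domRestrict_iff.1 hxy))

theorem continuous_retraction {s : Γ} (hs : S.Admissible K s) : Continuous (retraction hs) := by
  have htrace (x : K) : S.trace K s (retraction hs x) = S.trace K s x :=
    domRestrict_eq_domRestrict_iff.2 (eqOn_retraction hs x)
  have : Continuous fun x => (⟨retraction hs x, retraction_mem hs x⟩ : S.factorSet K s) :=
    (isClosedEmbedding_trace s).isInducing.continuous_iff.2
      (by simpa only [comp_def, htrace] using continuous_trace s)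
  exact continuous_subtype_val.comp this

theorem tendsto_retraction_of_isLUB {c : ℕ → Γ} (hc : Monotone c)
    (hadm : ∀ n, S.Admissible K (c n)) {t : Γ} (ht : IsLUB (range c) t)
    (htadm : S.Admissible K t) (x : K) :
    Tendsto (fun n => retraction (hadm n) x) atTop (𝓝 (retraction htadm x)) := by
  have hmem (n : ℕ) : retraction (hadm n) x ∈ S.factorSet K t :=
    factorSet_mono (ht.1 (mem_range_self n)) (retraction_mem _ x)
  refine tendsto_subtype_rng.1 (((isClosedEmbedding_trace t).isInducing.tendsto_nhds_iff
    (f := fun n => ⟨_, hmem n⟩) (y := ⟨_, retraction_mem htadm x⟩)).2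
    (tendsto_pi_nhds.2 fun d => tendsto_const_nhds.congr' ?_))
  obtain ⟨m, hm⟩ := mem_iUnion.1 ((S.Dmono.2 c t hc ht).subset d.2)
  filter_upwards [eventually_ge_atTop m] with n hn
  simp only [comp_apply, trace, domRestrict_apply]
  rw [eqOn_retraction htadm x d.2, eqOn_retraction _ x (S.Dmono.1 _ _ (hc hn) hm)]

theorem exists_eqOn_of_isLUB {c : ℕ → Γ} (hc : Monotone c) {t : Γ} (ht : IsLUB (range c) t)
    (x : K) (h : ∀ n, ∃ y ∈ S.factorSet K t, EqOn y.1.1 x.1.1 (S.D (c n))) :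
    ∃ y ∈ S.factorSet K t, EqOn y.1.1 x.1.1 (S.D t) := by
  choose y hyt hyx using h
  obtain ⟨z, -, hz⟩ :=
    CountablyCompactSpace.isCountablyCompact_univ.seq_clusterPt y (.of_forall fun _ => trivial)
  refine ⟨z, (S.isClosed_factorSet t).mem_of_mapClusterPt hz (.of_forall hyt), fun d hd => ?_⟩
  obtain ⟨m, hm⟩ := mem_iUnion.1 ((S.Dmono.2 c t hc ht).subset hd)
  exact (isClosed_eq (Cp.continuous_eval_subtype d) continuous_const).mem_of_mapClusterPt hz
    ((eventually_ge_atTop m).mono fun n hn => hyx n (S.Dmono.1 _ _ (hc hn) hm))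

theorem Admissible.of_isLUB {c : ℕ → Γ} (hc : Monotone c) (hadm : ∀ n, S.Admissible K (c n))
    {t : Γ} (ht : IsLUB (range c) t) : S.Admissible K t := fun x =>
  exists_eqOn_of_isLUB hc ht x fun n =>
    let ⟨y, hy, hyx⟩ := hadm n x
    ⟨y, factorSet_mono (ht.1 (mem_range_self n)) hy, hyx⟩

/-- A countable part of `K` with dense traces on `D_a` factors through a single index `b ≥ a`,
and the traces of `K_b` on `D_a` form a closed set. -/
theorem exists_ge_forall_exists_eqOn (hfac : ∀ x : K, ∃ s, x.1.1.FactorsThrough (S.q s))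
    (a : Γ) :
    ∃ b, a ≤ b ∧ ∀ x : K, ∃ y ∈ S.factorSet K b, EqOn y.1.1 x.1.1 (S.D a) := by
  have := (S.D_ctble a).to_subtype
  obtain ⟨T, hTr, hTc, hdense⟩ :=
    (IsSeparable.of_separableSpace (range (S.trace K a))).exists_countable_dense_subset
  obtain ⟨E, rfl, hinj⟩ := exists_image_eq_injOn_of_subset_range hTr
  choose σ hσ using hfac
  obtain ⟨g, hg⟩ := (((countable_of_injective_of_countable_image hinj hTc).image σ).insert a)
    |>.exists_eq_range (insert_nonempty _ _)
  obtain ⟨b, hb⟩ := bddAbove_range_of_directed_of_isLUB S.directed S.sigma g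
  rw [← hg] at hb
  have hE : E ⊆ S.factorSet K b := fun x hx =>
    factorSet_mono (hb (mem_insert_of_mem a (mem_image_of_mem σ hx))) (hσ x)
  have hclosed : IsClosed (S.trace K a '' S.factorSet K b) :=
    ((S.isClosed_factorSet b).isCountablyCompact.image (continuous_trace a)).isCompact.isClosed
  refine ⟨b, hb (mem_insert a _), fun x => ?_⟩
  obtain ⟨y, hy, hyx⟩ := closure_minimal (image_mono hE) hclosed (hdense (mem_range_self x))
  exact ⟨y, hy, domRestrict_eq_domRestrict_iff.1 hyx⟩

theorem exists_admissible_ge (hfac : ∀ x : K, ∃ s, x.1.1.FactorsThrough (S.q s)) (a : Γ) :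
    ∃ t, a ≤ t ∧ S.Admissible K t := by
  choose next le_next exists_eqOn_next using exists_ge_forall_exists_eqOn hfac
  let c : ℕ → Γ := fun n => next^[n] a
  have hc_succ (n : ℕ) : c (n + 1) = next (c n) := iterate_succ_apply' next n a
  have hc : Monotone c := monotone_nat_of_le_succ fun n => hc_succ n ▸ le_next (c n)
  obtain ⟨t, ht⟩ := S.sigma c hc
  refine ⟨t, ht.1 (mem_range_self 0), fun x => exists_eqOn_of_isLUB hc ht x fun n => ?_⟩
  obtain ⟨y, hy, hyx⟩ := exists_eqOn_next (c n) x
  exact ⟨y, factorSet_mono (hc_succ n ▸ ht.1 (mem_range_self (n + 1))) hy, hyx⟩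

theorem exists_isLUB_admissible {c : ℕ → {s : Γ // S.Admissible K s}} (hc : Monotone c) :
    ∃ t : {s : Γ // S.Admissible K s},
      IsLUB (range c) t ∧ IsLUB (range fun n => (c n).1) t.1 := by
  have hc' : Monotone fun n => (c n).1 := hc
  obtain ⟨t, ht⟩ := S.sigma _ hc'
  refine ⟨⟨t, .of_isLUB hc' (fun n => (c n).2) ht⟩, ⟨?_, fun u hu => ht.2 ?_⟩, ht⟩
  · rintro _ ⟨n, rfl⟩
    exact ht.1 (mem_range_self n)
  · rintro _ ⟨n, rfl⟩
    exact hu (mem_range_self n)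

theorem exists_admissible_mem_factorSet
    (hfac : ∀ x : K, ∃ s, x.1.1.FactorsThrough (S.q s)) (x : K) :
    ∃ t, S.Admissible K t ∧ x ∈ S.factorSet K t :=
  let ⟨s, hs⟩ := hfac x
  let ⟨t, hst, ht⟩ := exists_admissible_ge hfac s
  ⟨t, ht, factorSet_mono hst hs⟩

theorem isFullRSkeleton_retraction (hfac : ∀ x : K, ∃ s, x.1.1.FactorsThrough (S.q s)) :
    IsFullRSkeleton fun s : {s : Γ // S.Admissible K s} => retraction s.2 := by
  refine ⟨{ directed := fun s t => ?_
            sigma := fun c hc => ?_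
            cont := fun s => continuous_retraction s.2
            retract := fun s x => retraction_eq_self s.2 (retraction_mem s.2 x)
            cosmic := fun s => ?_
            comm₁ := fun s t hst x => ?_
            comm₂ := fun s t hst x => retraction_eq_self t.2
              (factorSet_mono (Subtype.coe_le_coe.2 hst) (retraction_mem s.2 x))
            chain := fun c T hc hT x => ?_
            toId := fun x => ?_ }, fun x => ?_⟩
  · obtain ⟨u₀, hsu, htu⟩ := S.directed s.1 t.1
    obtain ⟨u, hu, hadm⟩ := exists_admissible_ge hfac u₀
    exact ⟨⟨u, hadm⟩, hsu.trans hu, htu.trans hu⟩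
  · obtain ⟨t, ht, -⟩ := exists_isLUB_admissible hc
    exact ⟨t, ht⟩
  · have := (S.D_ctble s.1).to_subtype
    have := (isClosedEmbedding_trace (S := S) (K := K) s.1).isInducing.secondCountableTopology
    rw [range_retraction]
    exact exists_countable_network_of_secondCountableTopology _
  · refine eq_of_eqOn (retraction_mem _ _) (retraction_mem _ _) fun d hd => ?_
    rw [eqOn_retraction s.2 _ hd, eqOn_retraction t.2 x (S.Dmono.1 _ _ hst hd),
      eqOn_retraction s.2 x hd]
  · obtain ⟨t, ht, ht'⟩ := exists_isLUB_admissible hc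
    obtain rfl := hT.unique ht
    exact tendsto_retraction_of_isLUB (c := fun n => (c n).1) hc (fun n => (c n).2) ht' T.2 x
  · obtain ⟨t, ht, hxt⟩ := exists_admissible_mem_factorSet hfac x
    exact tendsto_const_nhds.congr' ((eventually_ge_atTop ⟨t, ht⟩).mono fun s hs =>
      (retraction_eq_self s.2 (factorSet_mono (Subtype.coe_le_coe.2 hs) hxt)).symm)
  · obtain ⟨t, ht, hxt⟩ := exists_admissible_mem_factorSet hfac x
    exact ⟨⟨t, ht⟩, range_retraction ht ▸ hxt⟩

end QSkeleton

theorem hasFullRSkeleton_of_qSkeleton_general {X : Type u} [TopologicalSpace X]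
    {Γ : Type u} [PartialOrder Γ] (S : QSkeleton X Γ) (K : Set (Cp X))
    (hK : ∀ f ∈ K, ∃ (s : Γ) (g : S.Xs s → ℝ),
      @Continuous _ _ (S.top s) _ g ∧ (f : Cp X).1 = g ∘ S.q s)
    (hcc : IsCountablyCompactSet K) :
    HasFullRSkeleton ↥K := by
  have : CountablyCompactSpace K := isCountablyCompact_iff_countablyCompactSpace.1
    (isCountablyCompact_iff_countable_open_cover.2 hcc)
  have hfac (x : K) : ∃ s, x.1.1.FactorsThrough (S.q s) :=
    let ⟨s, _, _, hx⟩ := hK x.1 x.2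
    ⟨s, fun a b hab => by rw [hx, comp_apply, comp_apply, hab]⟩
  exact ⟨_, _, _, S.isFullRSkeleton_retraction hfac⟩

theorem hasFullRSkeleton_of_qSkeleton {X : Type u} [TopologicalSpace X] [T35Space X]
    {Γ : Type u} [PartialOrder Γ] (S : QSkeleton X Γ) (K : Set (Cp X))
    (hK : ∀ f ∈ K, ∃ (s : Γ) (g : S.Xs s → ℝ),
      @Continuous _ _ (S.top s) _ g ∧ (f : Cp X).1 = g ∘ S.q s)
    (hcc : IsCountablyCompactSet K) :
    HasFullRSkeleton ↥K :=
  hasFullRSkeleton_of_qSkeleton_general S K hK hcc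
end

section
/- Let A ⊆ C_p(X). Then A ⊆ Δ_A*(C_p(Δ_A(X))). Moreover, if A is dense in Δ_A*(C_p(Δ_A(X))), then the diagonal map Δ_{cl(A)} : X → ℝ^{cl(A)} is an ℝ-quotient map onto its image. -/
open Filter Topology Set

universe u v

theorem diag_rQuotient {X : Type u} [TopologicalSpace X] [T35Space X] (A : Set (Cp X)) :
    (∀ f ∈ A, ∃ g : ↥(Set.range (cpDiag A)) → ℝ, Continuous g ∧
        ∀ x : X, (f : Cp X).1 x = g ⟨cpDiag A x, ⟨x, rfl⟩⟩) ∧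
    ({f : Cp X | ∃ g : ↥(Set.range (cpDiag A)) → ℝ, Continuous g ∧
        ∀ x : X, f.1 x = g ⟨cpDiag A x, ⟨x, rfl⟩⟩} ⊆ closure A →
      RQuotient fun x : X =>
        (⟨cpDiag (closure A) x, ⟨x, rfl⟩⟩ : ↥(Set.range (cpDiag (closure A))))) := by
  classical
  have evalCont : ∀ x : X, Continuous fun h : Cp X => h.1 x := fun x =>
    (continuous_apply x).comp continuous_subtype_val
  constructor
  · intro f hf
    exact ⟨fun z => z.1 ⟨f, hf⟩, (continuous_apply _).comp continuous_subtype_val,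
      fun x => rfl⟩
  · intro H
    refine ⟨?_, ?_, ?_⟩
    · exact Continuous.subtype_mk (continuous_pi fun h => h.1.2) _
    · intro z
      obtain ⟨x, hx⟩ := z.2
      exact ⟨x, Subtype.ext hx⟩
    · intro g hg
      set q : X → ↥(Set.range (cpDiag (closure A))) :=
        fun x => ⟨cpDiag (closure A) x, ⟨x, rfl⟩⟩ with hq
      set f : X → ℝ := fun x => g (q x) with hfdef
      have hf : Continuous f := hg
      -- fibers of Δ_A refine fibers of Δ_{cl A}
      have fib : ∀ x y : X, cpDiag A x = cpDiag A y →
          cpDiag (closure A) x = cpDiag (closure A) y := by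
        intro x y hxy
        funext h
        have hsub : closure A ⊆ {h : Cp X | h.1 x = h.1 y} :=
          closure_minimal (fun h hh => congrFun hxy ⟨h, hh⟩)
            (isClosed_eq (evalCont x) (evalCont y))
        exact hsub h.2
      have ffib : ∀ x y : X, cpDiag A x = cpDiag A y → f x = f y := by
        intro x y hxy
        simp only [hfdef, hq]
        congr 1
        exact Subtype.ext (fib x y hxy)
      -- separating functions
      have sep : ∀ x x' : X, ∃ v : (↥A → ℝ) → ℝ, Continuous v ∧
          (∀ y, cpDiag A y = cpDiag A x → v (cpDiag A y) = 1) ∧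
          (cpDiag A x ≠ cpDiag A x' → ∀ y, cpDiag A y = cpDiag A x' →
            v (cpDiag A y) = 0) := by
        intro x x'
        by_cases hne : cpDiag A x = cpDiag A x'
        · exact ⟨fun _ => 1, continuous_const, fun _ _ => rfl, fun h => absurd hne h⟩
        · obtain ⟨a, ha⟩ := Function.ne_iff.mp hne
          refine ⟨fun p => (p a - cpDiag A x' a) / (cpDiag A x a - cpDiag A x' a),
            ((continuous_apply a).sub continuous_const).div_const _, ?_, ?_⟩
          · intro y hy
            rw [hy]
            exact div_self (sub_ne_zero.mpr ha)
          · intro _ y hy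
            rw [hy]
            simp
      choose v hv1 hv2 hv3 using sep
      -- interpolating functions
      set uF : Finset X → (↥A → ℝ) → ℝ := fun F p =>
        ∑ x ∈ F, (f x / (F.filter fun x' => cpDiag A x' = cpDiag A x).card) *
          ∏ x' ∈ F.filter fun x' => ¬ cpDiag A x' = cpDiag A x, v x x' p with huFdef
      have huF : ∀ F, Continuous (uF F) := by
        intro F
        exact continuous_finset_sum _ fun x _ =>
          continuous_const.mul (continuous_finset_prod _ fun x' _ => hv1 x x')
      have key : ∀ (F : Finset X), ∀ y ∈ F, uF F (cpDiag A y) = f y := by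
        intro F y hy
        simp only [huFdef]
        rw [← Finset.sum_filter_add_sum_filter_not F
          (fun x => cpDiag A x = cpDiag A y)]
        have h2 : ∑ x ∈ F.filter (fun x => ¬ cpDiag A x = cpDiag A y),
            (f x / (F.filter fun x' => cpDiag A x' = cpDiag A x).card) *
              ∏ x' ∈ F.filter fun x' => ¬ cpDiag A x' = cpDiag A x,
                v x x' (cpDiag A y) = 0 := by
          apply Finset.sum_eq_zero
          intro x hx
          rw [Finset.mem_filter] at hx
          have hprod : (∏ x' ∈ F.filter fun x' => ¬ cpDiag A x' = cpDiag A x,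
              v x x' (cpDiag A y)) = 0 := by
            apply Finset.prod_eq_zero (i := y)
            · exact Finset.mem_filter.mpr ⟨hy, fun h => hx.2 h.symm⟩
            · exact hv3 x y hx.2 y rfl
          rw [hprod, mul_zero]
        rw [h2, add_zero]
        have h1 : ∀ x ∈ F.filter (fun x => cpDiag A x = cpDiag A y),
            (f x / (F.filter fun x' => cpDiag A x' = cpDiag A x).card) *
              ∏ x' ∈ F.filter fun x' => ¬ cpDiag A x' = cpDiag A x,
                v x x' (cpDiag A y) =
            f y / (F.filter fun x' => cpDiag A x' = cpDiag A y).card := by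
          intro x hx
          rw [Finset.mem_filter] at hx
          have hfil : (F.filter fun x' => cpDiag A x' = cpDiag A x) =
              (F.filter fun x' => cpDiag A x' = cpDiag A y) :=
            Finset.filter_congr fun x' _ => by rw [hx.2]
          have hprod : (∏ x' ∈ F.filter fun x' => ¬ cpDiag A x' = cpDiag A x,
              v x x' (cpDiag A y)) = 1 := by
            apply Finset.prod_eq_one
            intro x' _
            exact hv2 x x' y hx.2.symm
          rw [hprod, mul_one, hfil, ffib x y hx.2]
        rw [Finset.sum_congr rfl h1, Finset.sum_const, nsmul_eq_mul]
        have hcard : ((F.filter fun x' => cpDiag A x' = cpDiag A y).card : ℝ) ≠ 0 := by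
          have : y ∈ F.filter fun x' => cpDiag A x' = cpDiag A y :=
            Finset.mem_filter.mpr ⟨hy, rfl⟩
          exact_mod_cast Finset.card_ne_zero_of_mem this
        field_simp
      -- the approximating elements of `closure A`
      have diagACont : Continuous (cpDiag A) := continuous_pi fun a => a.1.2
      set dF : Finset X → Cp X := fun F =>
        ⟨fun x => uF F (cpDiag A x), (huF F).comp diagACont⟩ with hdF
      have hdmem : ∀ F, dF F ∈ closure A := by
        intro F
        apply H
        exact ⟨fun z => uF F z.1, (huF F).comp continuous_subtype_val, fun x => rfl⟩
      have htend : Tendsto dF atTop (𝓝 (⟨f, hf⟩ : Cp X)) := by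
        rw [tendsto_subtype_rng, tendsto_pi_nhds]
        intro x
        apply Tendsto.congr' _ (tendsto_const_nhds (x := f x))
        filter_upwards [Filter.eventually_ge_atTop ({x} : Finset X)] with F hF
        exact (key F x (Finset.singleton_subset_iff.mp hF)).symm
      have hfB : (⟨f, hf⟩ : Cp X) ∈ closure A := by
        have := mem_closure_of_tendsto htend (Filter.Eventually.of_forall hdmem)
        rwa [closure_closure] at this
      have hgeq : g = fun z : ↥(Set.range (cpDiag (closure A))) =>
          z.1 ⟨⟨f, hf⟩, hfB⟩ := by
        funext z
        obtain ⟨x, hx⟩ := z.2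
        have hz : z = q x := Subtype.ext hx.symm
        rw [hz]
        rfl
      rw [hgeq]
      exact (continuous_apply _).comp continuous_subtype_val
end

section
/- Every monotonically ω-stable space has a full q-skeleton. -/
open Filter Topology Set

universe u v

/-!
Index the skeleton by the countable sets `A ⊆ C_p(X)` and replace `A` by its rational lattice
hull `Ã`, the sublattice generated by the maps `c + d • f` with `c, d ∈ ℚ` and `f ∈ A ∪ {0}`;
`Ã` is still countable and depends ω-monotonically on `A`. Put `X_A = Δ_{cl Ã}(X)` and let `D_A`
pick a point from each member of the network `N(Ã)`, so that `q_A(D_A)` is dense in `X_A`.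
A pointwise lattice Stone–Weierstrass argument puts every continuous function that is constant
on the fibres of `Δ_A` into `cl Ã`. Hence a map `g` on `X_A` with `g ∘ q_A` continuous is a
coordinate projection, so `q_A` is `ℝ`-quotient; and `f ∈ cl Ã` for `A = {f}` gives fullness.
-/

open Function

section LatticeClosure

variable {β : Type*} [Lattice β]

theorem exists_finite_subset_of_mem_latticeClosure {s : Set β} {a : β}
    (ha : a ∈ latticeClosure s) : ∃ t ⊆ s, t.Finite ∧ a ∈ latticeClosure t := by
  refine latticeClosure_min (t := {a | ∃ t ⊆ s, t.Finite ∧ a ∈ latticeClosure t})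
    (fun a ha => ⟨{a}, singleton_subset_iff.2 ha, finite_singleton a, subset_latticeClosure rfl⟩)
    ⟨?_, ?_⟩ ha
  · rintro a ⟨t, hts, ht, hat⟩ b ⟨t', hts', ht', hbt'⟩
    exact ⟨t ∪ t', union_subset hts hts', ht.union ht', isSublattice_latticeClosure.supClosed
      (latticeClosure_mono subset_union_left hat) (latticeClosure_mono subset_union_right hbt')⟩
  · rintro a ⟨t, hts, ht, hat⟩ b ⟨t', hts', ht', hbt'⟩
    exact ⟨t ∪ t', union_subset hts hts', ht.union ht', isSublattice_latticeClosure.infClosed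
      (latticeClosure_mono subset_union_left hat) (latticeClosure_mono subset_union_right hbt')⟩

theorem latticeClosure_iUnion_of_directed {ι : Type*} [Nonempty ι] {s : ι → Set β}
    (hs : Directed (· ⊆ ·) s) : latticeClosure (⋃ i, s i) = ⋃ i, latticeClosure (s i) := by
  refine (iUnion_subset fun i => latticeClosure_mono (subset_iUnion s i)).antisymm' fun a ha => ?_
  obtain ⟨t, hts, ht, hat⟩ := exists_finite_subset_of_mem_latticeClosure ha
  obtain ⟨i, hti⟩ := hs.exists_mem_subset_of_finset_subset_biUnion (s := ht.toFinset) (by simpa)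
  exact mem_iUnion.2 ⟨i, latticeClosure_mono (by simpa using hti) hat⟩

end LatticeClosure

theorem Set.Countable.latticeClosure {β : Type*} [DistribLattice β] {s : Set β}
    (hs : s.Countable) : (latticeClosure s).Countable := by
  refine ((countable_ofPred_finite_subset hs).biUnion fun t ht =>
    ht.1.latticeClosure.countable).mono fun a ha => ?_
  obtain ⟨t, hts, ht, hat⟩ := exists_finite_subset_of_mem_latticeClosure ha
  exact mem_biUnion ⟨ht, hts⟩ hat

section PointwiseApproximation

variable {α : Type*}

theorem exists_affine_interpolation {u v a b : ℝ} (h : u = v → a = b) :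
    ∃ c d : ℝ, c + d * u = a ∧ c + d * v = b := by
  by_cases huv : u = v
  · exact ⟨a, 0, by simp, by simp [h huv]⟩
  · have huv' : u - v ≠ 0 := sub_ne_zero.2 huv
    refine ⟨a - (a - b) / (u - v) * u, (a - b) / (u - v), by ring, ?_⟩
    field_simp
    ring

-- The constant maps are the images of `0`.
def ratAffine (s : Set (α → ℝ)) : Set (α → ℝ) :=
  {g | ∃ c d : ℚ, ∃ f ∈ insert 0 s, g = fun x => c + d * f x}

theorem ratAffine_mono {s t : Set (α → ℝ)} (h : s ⊆ t) : ratAffine s ⊆ ratAffine t := by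
  rintro g ⟨c, d, f, hf, rfl⟩
  exact ⟨c, d, f, insert_subset_insert h hf, rfl⟩

theorem ratAffine_iUnion {ι : Type*} [Nonempty ι] (s : ι → Set (α → ℝ)) :
    ratAffine (⋃ i, s i) = ⋃ i, ratAffine (s i) := by
  refine (iUnion_subset fun i => ratAffine_mono (subset_iUnion s i)).antisymm' ?_
  rintro g ⟨c, d, f, rfl | hf, rfl⟩
  · exact mem_iUnion.2 ⟨Classical.arbitrary ι, c, d, 0, mem_insert _ _, rfl⟩
  · obtain ⟨i, hi⟩ := mem_iUnion.1 hf
    exact mem_iUnion.2 ⟨i, c, d, f, mem_insert_of_mem _ hi, rfl⟩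

theorem Set.Countable.ratAffine {s : Set (α → ℝ)} (hs : s.Countable) : (ratAffine s).Countable := by
  refine ((countable_univ (α := ℚ × ℚ)).image2 (hs.insert 0)
    fun p f x => (p.1 : ℝ) + p.2 * f x).mono ?_
  rintro g ⟨c, d, f, hf, rfl⟩
  exact ⟨(c, d), mem_univ _, f, hf, rfl⟩

theorem subset_ratAffine (s : Set (α → ℝ)) : s ⊆ ratAffine s := fun f hf =>
  ⟨0, 1, f, mem_insert_of_mem _ hf, by simp⟩

theorem latticeClosure_ratAffine_subset_setOf_eq {s : Set (α → ℝ)} {x y : α}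
    (hxy : ∀ f ∈ s, f x = f y) : latticeClosure (ratAffine s) ⊆ {g | g x = g y} := by
  refine latticeClosure_min ?_ ⟨fun a (ha : a x = a y) b (hb : b x = b y) => by simp [ha, hb],
    fun a (ha : a x = a y) b (hb : b x = b y) => by simp [ha, hb]⟩
  rintro g ⟨c, d, f, rfl | hf, rfl⟩
  · simp
  · simp [hxy f hf]

theorem exists_mem_ratAffine_abs_sub_lt {s : Set (α → ℝ)} {h : α → ℝ}
    (hh : ∀ x y, (∀ f ∈ s, f x = f y) → h x = h y) (x y : α) {ε : ℝ} (hε : 0 < ε) :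
    ∃ a ∈ ratAffine s, |a x - h x| < ε ∧ |a y - h y| < ε := by
  obtain ⟨f, hf, hfh⟩ : ∃ f ∈ insert 0 s, f x = f y → h x = h y := by
    by_cases hsep : ∀ f ∈ s, f x = f y
    · exact ⟨0, mem_insert _ _, fun _ => hh x y hsep⟩
    · obtain ⟨f, hf, hfxy⟩ := not_forall₂.1 hsep
      exact ⟨f, mem_insert_of_mem _ hf, fun h => absurd h hfxy⟩
  obtain ⟨c, d, hcx, hcy⟩ := exists_affine_interpolation hfh
  set U : Set (ℝ × ℝ) := {p | |p.1 + p.2 * f x - h x| < ε ∧ |p.1 + p.2 * f y - h y| < ε}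
  have hU : IsOpen U :=
    (isOpen_lt (f := fun p : ℝ × ℝ => |p.1 + p.2 * f x - h x|) (by fun_prop) continuous_const).inter
      (isOpen_lt (f := fun p : ℝ × ℝ => |p.1 + p.2 * f y - h y|) (by fun_prop) continuous_const)
  have hcd : (c, d) ∈ U := by simp [U, hcx, hcy, hε]
  obtain ⟨⟨c', d'⟩, hmem⟩ := (Rat.denseRange_cast.prodMap Rat.denseRange_cast).exists_mem_open
    hU ⟨_, hcd⟩
  exact ⟨_, ⟨c', d', f, hf, rfl⟩, hmem⟩

theorem IsSublattice.exists_forall_abs_sub_lt {L : Set (α → ℝ)} (hL : IsSublattice L)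
    (hne : L.Nonempty) {h : α → ℝ}
    (hpair : ∀ x y : α, ∀ ε > 0, ∃ a ∈ L, |a x - h x| < ε ∧ |a y - h y| < ε)
    (F : Finset α) {ε : α → ℝ} (hε : ∀ x ∈ F, 0 < ε x) :
    ∃ a ∈ L, ∀ x ∈ F, |a x - h x| < ε x := by
  rcases F.eq_empty_or_nonempty with rfl | hF
  · obtain ⟨a, ha⟩ := hne
    exact ⟨a, ha, by simp⟩
  have hpairF : ∀ x ∈ F, ∀ y ∈ F, ∃ a ∈ L, |a x - h x| < ε x ∧ |a y - h y| < ε y := by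
    intro x hx y hy
    obtain ⟨a, ha, hax, hay⟩ := hpair x y _ (lt_min (hε x hx) (hε y hy))
    exact ⟨a, ha, hax.trans_le (min_le_left _ _), hay.trans_le (min_le_right _ _)⟩
  choose! a haL hax hay using hpairF
  -- `b x` is below `h + ε` on `F` and above `h - ε` at `x`; their sup is then within `ε` on `F`.
  set b : α → α → ℝ := fun x => F.inf' hF (a x)
  have hbL : ∀ x ∈ F, b x ∈ L := fun x hx => hL.infClosed.finsetInf'_mem hF (haL x hx)
  have hb_lt : ∀ x ∈ F, ∀ z ∈ F, b x z < h z + ε z := fun x hx z hz =>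
    (Finset.inf'_le (a x) hz z).trans_lt (by linarith [(abs_sub_lt_iff.1 (hay x hx z hz)).1])
  have hb_gt : ∀ x ∈ F, h x - ε x < b x x := by
    intro x hx
    simp only [b, Finset.inf'_apply, Finset.lt_inf'_iff]
    intro y hy
    linarith [(abs_sub_lt_iff.1 (hax x hx y hy)).2]
  refine ⟨F.sup' hF b, hL.supClosed.finsetSup'_mem hF hbL, fun z hz => abs_sub_lt_iff.2 ⟨?_, ?_⟩⟩
  · have : F.sup' hF b z < h z + ε z := by
      simpa only [Finset.sup'_apply, Finset.sup'_lt_iff] using fun x hx => hb_lt x hx z hz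
    linarith
  · linarith [Finset.le_sup' b hz z, hb_gt z hz]

theorem mem_closure_of_forall_abs_sub_lt {L : Set (α → ℝ)} {h : α → ℝ}
    (H : ∀ (F : Finset α) (ε : α → ℝ), (∀ x ∈ F, 0 < ε x) → ∃ a ∈ L, ∀ x ∈ F, |a x - h x| < ε x) :
    h ∈ closure L := by
  have hbasis := Filter.hasBasis_pi fun x => Metric.nhds_basis_ball (x := h x)
  rw [← nhds_pi] at hbasis
  rw [mem_closure_iff_nhds_basis hbasis]
  rintro ⟨F, ε⟩ ⟨hF, hε⟩
  obtain ⟨a, haL, ha⟩ := H hF.toFinset ε (by simpa using hε)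
  exact ⟨a, haL, fun x hx => by simpa [Real.dist_eq] using ha x (by simpa using hx)⟩

theorem mem_closure_latticeClosure_ratAffine {s : Set (α → ℝ)} {h : α → ℝ}
    (hh : ∀ x y, (∀ f ∈ s, f x = f y) → h x = h y) :
    h ∈ closure (latticeClosure (ratAffine s)) := by
  refine mem_closure_of_forall_abs_sub_lt fun F _ hε =>
    isSublattice_latticeClosure.exists_forall_abs_sub_lt ?_ (fun x y ε hε => ?_) F hε
  · exact ⟨0, subset_latticeClosure ⟨0, 0, 0, mem_insert _ _, by ext; simp⟩⟩
  · obtain ⟨a, ha, hax, hay⟩ := exists_mem_ratAffine_abs_sub_lt hh x y hε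
    exact ⟨a, subset_latticeClosure ha, hax, hay⟩

end PointwiseApproximation

namespace CtbSet

variable {α : Type*}

def iUnion {ι : Sort*} [Countable ι] (c : ι → CtbSet α) : CtbSet α :=
  ⟨⋃ i, (c i).1, countable_iUnion fun i => (c i).2⟩

theorem isLUB_iUnion {ι : Sort*} [Countable ι] (c : ι → CtbSet α) : IsLUB (range c) (iUnion c) :=
  ⟨forall_mem_range.2 fun i => subset_iUnion (fun i => (c i).1) i,
    fun _ hb => iUnion_subset fun i => hb (mem_range_self i)⟩

theorem eq_iUnion_of_isLUB {ι : Sort*} [Countable ι] {c : ι → CtbSet α} {t : CtbSet α}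
    (ht : IsLUB (range c) t) : t.1 = ⋃ i, (c i).1 :=
  congrArg Subtype.val (ht.unique (isLUB_iUnion c))

end CtbSet

section Cp

variable {X : Type u} [TopologicalSpace X]

theorem latticeClosure_ratAffine_subset_continuous {s : Set (X → ℝ)} (hs : ∀ f ∈ s, Continuous f) :
    latticeClosure (ratAffine s) ⊆ {g | Continuous g} := by
  refine latticeClosure_min ?_ ⟨fun _ ha _ hb => ha.sup hb, fun _ ha _ hb => ha.inf hb⟩
  rintro g ⟨c, d, f, rfl | hf, rfl⟩
  · exact continuous_const.add (continuous_const.mul continuous_zero)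
  · exact continuous_const.add (continuous_const.mul (hs f hf))

def cpHull (A : CtbSet (Cp X)) : CtbSet (Cp X) :=
  ⟨Subtype.val ⁻¹' latticeClosure (ratAffine (Subtype.val '' A.1)),
    (A.2.image _).ratAffine.latticeClosure.preimage Subtype.val_injective⟩

theorem subset_cpHull (A : CtbSet (Cp X)) : A.1 ⊆ (cpHull A).1 := fun _ hf =>
  subset_latticeClosure (subset_ratAffine _ (mem_image_of_mem _ hf))

theorem cpHull_mono {A B : CtbSet (Cp X)} (h : A ≤ B) : (cpHull A).1 ⊆ (cpHull B).1 :=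
  preimage_mono (latticeClosure_mono (ratAffine_mono (image_mono h)))

theorem cpHull_eq_iUnion {c : ℕ → CtbSet (Cp X)} (hc : Monotone c) {t : CtbSet (Cp X)}
    (ht : t.1 = ⋃ n, (c n).1) : (cpHull t).1 = ⋃ n, (cpHull (c n)).1 := by
  have hdir : Directed (· ⊆ ·) fun n => ratAffine (Subtype.val '' (c n).1) :=
    Monotone.directed_le fun _ _ hmn => ratAffine_mono (image_mono (hc hmn))
  simp only [cpHull, ht, image_iUnion, ratAffine_iUnion, latticeClosure_iUnion_of_directed hdir,
    preimage_iUnion]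

theorem cpDiag_closure_cpHull_eq {A : CtbSet (Cp X)} {x y : X} (hxy : ∀ f ∈ A.1, f.1 x = f.1 y) :
    cpDiag (closure (cpHull A).1) x = cpDiag (closure (cpHull A).1) y := by
  have hsub : closure (cpHull A).1 ⊆ {f : Cp X | f.1 x = f.1 y} :=
    closure_minimal (fun f hf => latticeClosure_ratAffine_subset_setOf_eq
        (by rintro _ ⟨f, hf, rfl⟩; exact hxy f hf) hf)
      (isClosed_eq ((continuous_apply x).comp continuous_subtype_val)
        ((continuous_apply y).comp continuous_subtype_val))
  exact funext fun f => hsub f.2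

theorem mem_closure_cpHull {A : CtbSet (Cp X)} {φ : Cp X}
    (hφ : ∀ x y, (∀ f ∈ A.1, f.1 x = f.1 y) → φ.1 x = φ.1 y) : φ ∈ closure (cpHull A).1 := by
  have himage : Subtype.val '' (cpHull A).1 = latticeClosure (ratAffine (Subtype.val '' A.1)) :=
    image_preimage_eq_of_subset
      ((latticeClosure_ratAffine_subset_continuous (by rintro _ ⟨f, -, rfl⟩; exact f.2)).trans
        fun g hg => ⟨⟨g, hg⟩, rfl⟩)
  rw [closure_subtype, himage]
  exact mem_closure_latticeClosure_ratAffine fun x y hxy =>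
    hφ x y fun f hf => hxy f.1 (mem_image_of_mem _ hf)

theorem rQuotient_rangeFactorization_cpDiag {B : Set (Cp X)}
    (hB : ∀ φ : Cp X, (∀ x y, cpDiag B x = cpDiag B y → φ.1 x = φ.1 y) → φ ∈ B) :
    RQuotient (rangeFactorization (cpDiag B)) := by
  refine ⟨(continuous_pi fun f => f.1.2).subtype_mk _, rangeFactorization_surjective,
    fun g hg => ?_⟩
  have hφ : (⟨g ∘ rangeFactorization (cpDiag B), hg⟩ : Cp X) ∈ B :=
    hB _ fun x y hxy => congrArg g (Subtype.ext hxy)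
  -- `g` is the coordinate of `ℝ^B` at the function `g ∘ q ∈ B`.
  have hg_eq : g = fun z => z.1 ⟨_, hφ⟩ := by
    funext z
    obtain ⟨x, rfl⟩ := rangeFactorization_surjective z
    rfl
  rw [hg_eq]
  exact (continuous_apply _).comp continuous_subtype_val

end Cp

section RangeFactorization

variable {X Y Z : Type*} [TopologicalSpace Y] [TopologicalSpace Z]

def choosePoints (𝒩 : Set (Set X)) : Set X := ⋃ M ∈ 𝒩, ⋃ hM : M.Nonempty, {hM.some}

theorem Set.Countable.choosePoints {𝒩 : Set (Set X)} (h : 𝒩.Countable) :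
    (choosePoints 𝒩).Countable :=
  h.biUnion fun _ _ => countable_iUnion fun _ => countable_singleton _

theorem choosePoints_mono {𝒩 𝒩' : Set (Set X)} (h : 𝒩 ⊆ 𝒩') : choosePoints 𝒩 ⊆ choosePoints 𝒩' :=
  biUnion_subset_biUnion_left h

theorem choosePoints_iUnion {ι : Sort*} (𝒩 : ι → Set (Set X)) :
    choosePoints (⋃ i, 𝒩 i) = ⋃ i, choosePoints (𝒩 i) :=
  biUnion_iUnion _ _

theorem dense_rangeFactorization_image_choosePoints {𝒩 : Set (Set X)} {f : X → Y}
    (h : IsNetworkOfMap 𝒩 f) : Dense (rangeFactorization f '' choosePoints 𝒩) := by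
  refine IsInducing.subtypeVal.dense_iff.2 fun ⟨_, x, rfl⟩ => mem_closure_iff.2 fun O hO hxO => ?_
  obtain ⟨M, hM, hxM, hMO⟩ := h x O hO hxO
  have hne : M.Nonempty := ⟨x, hxM⟩
  exact ⟨f hne.some, hMO (mem_image_of_mem f hne.some_mem), rangeFactorization f hne.some,
    mem_image_of_mem _ (mem_biUnion hM (mem_iUnion.2 ⟨hne, rfl⟩)), rfl⟩

theorem exists_rangeFactorization_eq_comp {f : X → Y} {g : X → Z} {r : Y → Z} (hr : Continuous r)
    (hg : g = r ∘ f) : ∃ p : range f → range g, Continuous p ∧ Surjective p ∧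
      ∀ x, rangeFactorization g x = p (rangeFactorization f x) := by
  subst hg
  have hp : ∀ y : range f, r y ∈ range (r ∘ f) := by
    rintro ⟨_, x, rfl⟩
    exact ⟨x, rfl⟩
  refine ⟨fun y => ⟨r y, hp y⟩, (hr.comp continuous_subtype_val).subtype_mk hp, ?_, fun x => rfl⟩
  rintro ⟨_, x, rfl⟩
  exact ⟨rangeFactorization f x, rfl⟩

end RangeFactorization

section Skeleton

variable {X : Type u} [TopologicalSpace X]

def cpSkeleton (N : CtbSet (Cp X) → CtbSet (Set X)) (hN : OmegaMonotone N)
    (hnet : ∀ A : CtbSet (Cp X), IsNetworkOfMap (N A).1 (cpDiag (closure A.1))) :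
    QSkeleton X (CtbSet (Cp X)) where
  Xs A := range (cpDiag (closure (cpHull A).1))
  top _ := inferInstance
  q A := rangeFactorization (cpDiag (closure (cpHull A).1))
  D A := choosePoints (N (cpHull A)).1
  directed A B := ⟨⟨A.1 ∪ B.1, A.2.union B.2⟩, subset_union_left, subset_union_right⟩
  sigma c _ := ⟨CtbSet.iUnion c, CtbSet.isLUB_iUnion c⟩
  rquot A := rQuotient_rangeFactorization_cpDiag fun φ hφ => mem_closure_cpHull fun x y hxy =>
    hφ x y (cpDiag_closure_cpHull_eq hxy)
  D_ctble A := (N (cpHull A)).2.choosePoints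
  dense A := dense_rangeFactorization_image_choosePoints (hnet (cpHull A))
  proj A B hAB := exists_rangeFactorization_eq_comp
    (r := fun z f => z ⟨f, closure_mono (cpHull_mono hAB) f.2⟩)
    (continuous_pi fun _ => continuous_apply _) rfl
  Dmono := by
    refine ⟨fun A B hAB => choosePoints_mono (hN.1 _ _ (cpHull_mono hAB)), fun c t hc ht => ?_⟩
    beta_reduce
    rw [hN.2 (fun n => cpHull (c n)) _ (fun n => cpHull_mono (hc n.le_succ))
      (cpHull_eq_iUnion hc (CtbSet.eq_iUnion_of_isLUB ht)), choosePoints_iUnion]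

theorem cpSkeleton_full (N : CtbSet (Cp X) → CtbSet (Set X)) (hN : OmegaMonotone N)
    (hnet : ∀ A : CtbSet (Cp X), IsNetworkOfMap (N A).1 (cpDiag (closure A.1))) :
    (cpSkeleton N hN hnet).Full := by
  intro f hf
  set A : CtbSet (Cp X) := ⟨{⟨f, hf⟩}, countable_singleton _⟩
  have hfA : (⟨f, hf⟩ : Cp X) ∈ closure (cpHull A).1 := subset_closure (subset_cpHull A rfl)
  refine ⟨A, fun z => z.1 ⟨_, hfA⟩, ?_, rfl⟩
  show Continuous fun z : range (cpDiag (closure (cpHull A).1)) => z.1 ⟨_, hfA⟩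
  exact (continuous_apply _).comp continuous_subtype_val

end Skeleton

theorem hasFullQSkeleton_of_monotonicallyOmegaStable_general (X : Type u) [TopologicalSpace X]
    (h : MonotonicallyOmegaStable X) : HasFullQSkeleton X := by
  obtain ⟨N, hN, hnet⟩ := h
  exact ⟨CtbSet (Cp X), inferInstance, cpSkeleton N hN hnet, cpSkeleton_full N hN hnet⟩

theorem hasFullQSkeleton_of_monotonicallyOmegaStable (X : Type u) [TopologicalSpace X]
    [T35Space X] (h : MonotonicallyOmegaStable X) : HasFullQSkeleton X :=
  hasFullQSkeleton_of_monotonicallyOmegaStable_general X h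
end

section
/- Let {r_s : s ∈ Γ} be a strong r-skeleton on a space X. Then for each s ∈ Γ and each countable family F of closed subsets of finite powers of X (i.e., F ⊆ ⋃_{n∈ℕ} exp(X^n) countable), there exists t ∈ Γ with s ≤ t such that r_t^n(F) ⊆ F whenever F ∈ F and F ⊆ X^n, where r_t^n denotes the n-th power of r_t. -/
open Filter Topology Set

universe u v

theorem strongRSkeleton_countable_family {X : Type u} [TopologicalSpace X] [T35Space X]
    {Γ : Type v} [PartialOrder Γ] (r : Γ → X → X) (h : IsStrongRSkeleton r) (s : Γ)
    (𝓕 : Set ((n : ℕ) × Set (Fin n → X))) (hc : 𝓕.Countable)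
    (hcl : ∀ F ∈ 𝓕, IsClosed F.2 ∧ F.2.Nonempty) :
    ∃ t : Γ, s ≤ t ∧
      ∀ F ∈ 𝓕, (fun (v : Fin F.1 → X) (i : Fin F.1) => r t (v i)) '' F.2 ⊆ F.2 := by
  obtain ⟨hsk, hstrong⟩ := h
  rcases 𝓕.eq_empty_or_nonempty with h𝓕 | h𝓕
  · exact ⟨s, le_refl s, by simp [h𝓕]⟩
  obtain ⟨e, he⟩ := Set.Countable.exists_eq_range hc h𝓕
  choose pick hpick₁ hpick₂ using fun (u : Γ) (F : (n : ℕ) × Set (Fin n → X))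
    (hF : IsClosed F.2) => hstrong u F.1 F.2 hF
  have hclo : ∀ k, IsClosed (e k).2 := fun k => (hcl (e k) (by rw [he]; exact ⟨k, rfl⟩)).1
  let t : ℕ → Γ := fun n => Nat.rec s (fun n u => pick u (e (Nat.unpair n).1) (hclo _)) n
  have hstep : ∀ n, t n ≤ t (n + 1) := fun n => hpick₁ _ _ _
  have hmono : Monotone t := monotone_nat_of_le_succ hstep
  obtain ⟨T, hT⟩ := hsk.sigma t hmono
  refine ⟨T, hT.1 ⟨0, rfl⟩, ?_⟩
  intro F hF
  have : F ∈ Set.range e := he ▸ hF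
  obtain ⟨m, rfl⟩ := this
  rintro w ⟨v, hv, rfl⟩
  have key : ∀ n, (Nat.unpair n).1 = m → (fun i => r (t (n + 1)) (v i)) ∈ (e m).2 := by
    intro n hn
    subst hn
    exact hpick₂ (t n) (e (Nat.unpair n).1) (hclo _) ⟨v, hv, rfl⟩
  have hmem : ∀ k, (fun i => r (t (Nat.pair m k + 1)) (v i)) ∈ (e m).2 :=
    fun k => key (Nat.pair m k) (by simp)
  have hlim : Tendsto (fun k => fun i => r (t (Nat.pair m k + 1)) (v i)) atTop
      (𝓝 (fun i => r T (v i))) := by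
    rw [tendsto_pi_nhds]
    intro i
    have h1 : Tendsto (fun n => r (t n) (v i)) atTop (𝓝 (r T (v i))) :=
      hsk.chain t T hmono hT (v i)
    have h2 : Tendsto (fun k => Nat.pair m k + 1) atTop atTop :=
      tendsto_atTop_atTop.2 fun b =>
        ⟨b, fun a ha => le_trans (le_trans ha (Nat.right_le_pair m a)) (Nat.le_succ _)⟩
    exact h1.comp h2
  exact (hclo m).mem_of_tendsto hlim (Filter.Eventually.of_forall hmem)
end

section
/- If {r_s : s ∈ Γ} is a full r-skeleton on X and for each s ∈ Γ one defines r̂_s : C_p(X) → C_p(X) by r̂_s(f) = f ∘ r_s, then {r̂_s : s ∈ Γ} is an r-skeleton in C_p(X). -/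
open Filter Topology Set

universe u v

theorem isRSkeleton_cp_of_full {X : Type u} [TopologicalSpace X] [T35Space X]
    {Γ : Type v} [PartialOrder Γ] (r : Γ → X → X) (h : IsFullRSkeleton r) :
    IsRSkeleton fun (s : Γ) (f : Cp X) => (⟨f.1 ∘ r s, f.2.comp (h.1.cont s)⟩ : Cp X) := by
  classical
  obtain ⟨hsk, -⟩ := h
  constructor
  · exact hsk.directed
  · exact hsk.sigma
  · intro s
    exact Continuous.subtype_mk
      (continuous_pi fun x => (continuous_apply (r s x)).comp (continuous_subtype_val : Continuous (fun f : Cp X => f.1))) _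
  · intro s f
    apply Subtype.ext; funext x
    show f.1 (r s (r s x)) = f.1 (r s x)
    rw [hsk.retract]
  · -- cosmic
    intro s
    obtain ⟨N, hNc, hNsub, hNnet⟩ := hsk.cosmic s
    haveI : Countable ↥N := hNc.to_subtype
    set F : List (Set X × ℚ × ℚ) → Set (Cp X) := fun L =>
      {g : Cp X | g.1 ∘ r s = g.1 ∧
        ∀ p ∈ L, ∀ y ∈ p.1, g.1 y ∈ Set.Ioo (p.2.1 : ℝ) (p.2.2 : ℝ)} with hFdef
    refine ⟨Set.range (fun L : List (↥N × ℚ × ℚ) =>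
        F (L.map fun p => ((p.1 : Set X), p.2))), Set.countable_range _, ?_, ?_⟩
    · rintro W ⟨L, rfl⟩ g hg
      exact ⟨g, Subtype.ext hg.1⟩
    · intro g hg U hU hgU
      obtain ⟨f0, hf0⟩ := hg
      have hfix : g.1 ∘ r s = g.1 := by
        rw [← hf0]
        funext x
        exact congrArg f0.1 (hsk.retract s x)
      have hrng : ∀ x, g.1 (r s x) = g.1 x := fun x => congrFun hfix x
      obtain ⟨V, hV, hVU⟩ := isOpen_induced_iff.mp hU
      rw [← hVU] at hgU
      obtain ⟨I, u, hu, hIV⟩ := isOpen_pi_iff.mp hV g.1 hgU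
      have key : ∀ x : X, x ∈ I → ∃ (a b : ℚ) (M : Set X), M ∈ N ∧ r s x ∈ M ∧
          (∀ y ∈ M, g.1 y ∈ Set.Ioo (a : ℝ) b) ∧ Set.Ioo (a : ℝ) (b : ℝ) ⊆ u x := by
        intro x hx
        have hux : u x ∈ 𝓝 (g.1 x) := (hu x hx).1.mem_nhds (hu x hx).2
        obtain ⟨l, m, hlm, hsubu⟩ := mem_nhds_iff_exists_Ioo_subset.mp hux
        obtain ⟨a, ha1, ha2⟩ := exists_rat_btwn hlm.1
        obtain ⟨b, hb1, hb2⟩ := exists_rat_btwn hlm.2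
        have hIoo : Set.Ioo (a : ℝ) (b : ℝ) ⊆ u x :=
          fun y hy => hsubu ⟨lt_trans ha1 hy.1, lt_trans hy.2 hb2⟩
        have hopen : IsOpen (g.1 ⁻¹' Set.Ioo (a : ℝ) b) := isOpen_Ioo.preimage g.2
        have hrx : r s x ∈ g.1 ⁻¹' Set.Ioo (a : ℝ) b := by
          show g.1 (r s x) ∈ Set.Ioo (a : ℝ) (b : ℝ)
          rw [hrng x]
          exact ⟨ha2, hb1⟩
        obtain ⟨M, hMN, hrM, hMsub⟩ := hNnet (r s x) ⟨x, rfl⟩ _ hopen hrx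
        exact ⟨a, b, M, hMN, hrM, fun y hy => hMsub hy, hIoo⟩
      choose a b M hMN hrM hmap hIoo using key
      let L : List (↥N × ℚ × ℚ) :=
        I.attach.toList.map (fun x => (⟨M x.1 x.2, hMN x.1 x.2⟩, a x.1 x.2, b x.1 x.2))
      refine ⟨F (L.map fun p => ((p.1 : Set X), p.2)), ⟨L, rfl⟩, ?_, ?_⟩
      · refine ⟨hfix, ?_⟩
        intro p hp y hy
        obtain ⟨q, hq, rfl⟩ := List.mem_map.mp hp
        obtain ⟨x, -, rfl⟩ := List.mem_map.mp hq
        exact hmap x.1 x.2 y hy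
      · intro h0 hh0
        rw [← hVU]
        apply hIV
        intro x hxI
        have hx : x ∈ I := hxI
        have hxL : (⟨M x hx, hMN x hx⟩, a x hx, b x hx) ∈ L :=
          List.mem_map.mpr ⟨⟨x, hx⟩, by simp, rfl⟩
        have hp : ((M x hx : Set X), a x hx, b x hx) ∈ L.map (fun p => ((p.1 : Set X), p.2)) :=
          List.mem_map.mpr ⟨_, hxL, rfl⟩
        have hmem := hh0.2 _ hp (r s x) (hrM x hx)
        have heq : h0.1 (r s x) = h0.1 x := congrFun hh0.1 x
        rw [heq] at hmem
        exact hIoo x hx hmem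
  · intro s t hst f
    apply Subtype.ext; funext x
    show f.1 (r t (r s x)) = f.1 (r s x)
    rw [hsk.comm₂ s t hst]
  · intro s t hst f
    apply Subtype.ext; funext x
    show f.1 (r s (r t x)) = f.1 (r s x)
    rw [hsk.comm₁ s t hst]
  · intro sn t hmono hlub f
    rw [tendsto_subtype_rng, tendsto_pi_nhds]
    intro x
    exact (f.2.tendsto (r t x)).comp (hsk.chain sn t hmono hlub x)
  · intro f
    rw [tendsto_subtype_rng, tendsto_pi_nhds]
    intro x
    exact (f.2.tendsto x).comp (hsk.toId x)
end
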